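/- arXiv:1308.4260 — 4 statements merged into one kernel-verified Lean document; each statement's English description precedes it below -/
import Mathlib

section
/- Let S be a uniformly recurrent tree set over a finite alphabet A with A ⊆ S. Then for any w in S, the set R_S(w) of first right return words to w is a basis of the free group F_A on A. -/
open List

/-- `u` is a factor of `v`. -/
def IsFactor {A : Type*} (u v : List A) : Prop := ∃ p s : List A, v = p ++ u ++ s

/-- A set of words is factorial if it contains the factors of its elements. -/
def Factorial {A : Type*} (S : Set (List A)) : Prop :=
  ∀ v ∈ S, ∀ u : List A, IsFactor u v → u ∈ S

/-- Left extensions of `w` in `S` taken inside the set `U`. -/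
def leftExts {A : Type*} (S U : Set (List A)) (w : List A) : Set (List A) :=
  {l | l ∈ U ∧ l ++ w ∈ S}

/-- Right extensions of `w` in `S` taken inside the set `V`. -/
def rightExts {A : Type*} (S V : Set (List A)) (w : List A) : Set (List A) :=
  {r | r ∈ V ∧ w ++ r ∈ S}

/-- The generalized extension graph `E_{U,V}(w)`: a bipartite undirected graph on the
disjoint union of `U(w)` and `V(w)`, with an edge between `l` and `r` iff `l ++ w ++ r ∈ S`. -/
def ExtGraph {A : Type*} (S U V : Set (List A)) (w : List A) :
    SimpleGraph (↥(leftExts S U w) ⊕ ↥(rightExts S V w)) where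
  Adj x y :=
    (∃ l r, x = Sum.inl l ∧ y = Sum.inr r ∧ l.val ++ w ++ r.val ∈ S) ∨
    (∃ l r, x = Sum.inr r ∧ y = Sum.inl l ∧ l.val ++ w ++ r.val ∈ S)
  symm := by
    constructor
    rintro x y (⟨l, r, hx, hy, h⟩ | ⟨l, r, hx, hy, h⟩)
    · exact Or.inr ⟨l, r, hy, hx, h⟩
    · exact Or.inl ⟨l, r, hy, hx, h⟩
  loopless := by
    constructor
    rintro x (⟨l, r, hx, hy, _⟩ | ⟨l, r, hx, hy, _⟩) <;> subst hx <;> simp at hy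

/-- The set of one-letter words. -/
def letterWords (A : Type*) : Set (List A) := Set.range fun a : A => [a]

/-- The extension graph `E(w)` of `w` in `S` (extensions by letters). -/
def EGraph {A : Type*} (S : Set (List A)) (w : List A) :=
  ExtGraph S (letterWords A) (letterWords A) w

/-- `S` is biextendable: factorial and every word extends on both sides by a letter. -/
def Biext {A : Type*} (S : Set (List A)) : Prop :=
  Factorial S ∧ ∀ w ∈ S, ∃ a b : A, a :: (w ++ [b]) ∈ S

/-- `S` is an acyclic set. -/
def SAcyclic {A : Type*} (S : Set (List A)) : Prop :=
  Biext S ∧ ∀ w ∈ S, (EGraph S w).IsAcyclic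

/-- `S` is a connected set. -/
def SConn {A : Type*} (S : Set (List A)) : Prop :=
  Biext S ∧ ∀ w ∈ S, (EGraph S w).Connected

/-- `S` is a tree set. -/
def STree {A : Type*} (S : Set (List A)) : Prop :=
  Biext S ∧ ∀ w ∈ S, (EGraph S w).IsTree

/-- A prefix code: nonempty words, none a proper prefix of another. -/
def IsPrefixCode {A : Type*} (X : Set (List A)) : Prop :=
  (∀ x ∈ X, x ≠ []) ∧ ∀ x ∈ X, ∀ y ∈ X, x <+: y → x = y

/-- A suffix code: nonempty words, none a proper suffix of another. -/
def IsSuffixCode {A : Type*} (X : Set (List A)) : Prop :=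
  (∀ x ∈ X, x ≠ []) ∧ ∀ x ∈ X, ∀ y ∈ X, x <:+ y → x = y

/-- A bifix code. -/
def IsBifixCode {A : Type*} (X : Set (List A)) : Prop :=
  IsPrefixCode X ∧ IsSuffixCode X

/-- An `S`-maximal prefix code. -/
def IsSMaxPrefixCode {A : Type*} (S X : Set (List A)) : Prop :=
  IsPrefixCode X ∧ X ⊆ S ∧ ∀ Y : Set (List A), IsPrefixCode Y → Y ⊆ S → X ⊆ Y → X = Y

/-- An `S`-maximal suffix code. -/
def IsSMaxSuffixCode {A : Type*} (S X : Set (List A)) : Prop :=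
  IsSuffixCode X ∧ X ⊆ S ∧ ∀ Y : Set (List A), IsSuffixCode Y → Y ⊆ S → X ⊆ Y → X = Y

/-- An `S`-maximal bifix code. -/
def IsSMaxBifixCode {A : Type*} (S X : Set (List A)) : Prop :=
  IsBifixCode X ∧ X ⊆ S ∧ ∀ Y : Set (List A), IsBifixCode Y → Y ⊆ S → X ⊆ Y → X = Y

/-- The canonical embedding of words over `A` into the free group `F_A`. -/
def toFG {A : Type*} (w : List A) : FreeGroup A := (w.map FreeGroup.of).prod

/-- A subset of a group is free if it is a basis of the subgroup it generates, i.e. the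
induced morphism from the free group over it is injective. -/
def IsFreeSubset {G : Type*} [Group G] (X : Set G) : Prop :=
  Function.Injective ⇑(FreeGroup.lift fun x : X => (x : G))

/-- The submonoid `X*` of `A*` generated by `X`, as a set of words. -/
def star {A : Type*} (X : Set (List A)) : Set (List A) :=
  {w | ∃ l : List (List A), (∀ u ∈ l, u ∈ X) ∧ w = l.flatten}

/-- Every word of `S` is right-extendable by a letter. -/
def RightExtendable {A : Type*} (S : Set (List A)) : Prop :=
  ∀ w ∈ S, ∃ a : A, w ++ [a] ∈ S

/-- `S` is uniformly recurrent. -/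
def UnifRecurrent {A : Type*} (S : Set (List A)) : Prop :=
  RightExtendable S ∧
    ∀ u ∈ S, ∃ n : ℕ, 1 ≤ n ∧ ∀ v ∈ S, v.length = n → IsFactor u v

/-- `S` is recurrent. -/
def Recurrent {A : Type*} (S : Set (List A)) : Prop :=
  S ≠ {([] : List A)} ∧ Factorial S ∧ ∀ u ∈ S, ∀ w ∈ S, ∃ v ∈ S, u ++ v ++ w ∈ S

/-- The set `Γ_S(w)` of right return words to `w`. -/
def retWords {A : Type*} (S : Set (List A)) (w : List A) : Set (List A) :=
  {x | x ∈ S ∧ w ++ x ∈ S ∧ ∃ y : List A, y ≠ [] ∧ w ++ x = y ++ w}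

/-- The set `R_S(w)` of first right return words to `w`. -/
def firstRet {A : Type*} (S : Set (List A)) (w : List A) : Set (List A) :=
  {x | x ∈ retWords S w ∧ ¬ ∃ y ∈ retWords S w, ∃ z : List A, z ≠ [] ∧ x = y ++ z}

/-- The quantity `m(w) = e(w) - l(w) - r(w) + 1`. -/
noncomputable def mval {A : Type*} (S : Set (List A)) (w : List A) : ℤ :=
  (Set.ncard {p : A × A | p.1 :: (w ++ [p.2]) ∈ S} : ℤ)
    - (Set.ncard {a : A | a :: w ∈ S} : ℤ) - (Set.ncard {b : A | w ++ [b] ∈ S} : ℤ) + 1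

/-- A strong set: factorial and every word is strong or neutral. -/
def SStrong {A : Type*} (S : Set (List A)) : Prop :=
  Factorial S ∧ ∀ w ∈ S, 0 ≤ mval S w

/-- A weak set: factorial and every word is weak or neutral. -/
def SWeak {A : Type*} (S : Set (List A)) : Prop :=
  Factorial S ∧ ∀ w ∈ S, mval S w ≤ 0

/-- A neutral set: factorial and every word is neutral. -/
def SNeutral {A : Type*} (S : Set (List A)) : Prop :=
  Factorial S ∧ ∀ w ∈ S, mval S w = 0

/-!
Generation: in a connected set, every element of `F_A` is the label of a loop, possibly running
along edges backwards, in every Rauzy graph; loops are lifted from order `n` to order `n + 1`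
through the connected extension graphs `E(u)`, `|u| = n`. Once `n` is so large that `w` occurs in
every word of length `n`, cutting such a loop at the last occurrences of `w` writes its label as a
product of first return words.

Freeness: a tree set is neutral. Summing `r(x) - 1` over the words `x` of length `n` gives
`Card A - 1` by neutrality, and `Card R_S(w) - 1` after grouping the words by their suffix starting
at the last occurrence of `w`. So `R_S(w)` generates `F_A` with `Card A` elements, and it is a
basis because free groups of finite rank are residually finite, hence Hopfian.
-/

section FreeGroups

theorem exists_perm_of_rel {α : Type*} [Finite α] (r : α → α → Prop)
    (hfun : ∀ a b c, r a b → r a c → b = c) (hinj : ∀ a b c, r a c → r b c → a = b) :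
    ∃ σ : Equiv.Perm α, ∀ a b, r a b → σ a = b := by
  classical
  let e : {a // ∃ b, r a b} ≃ {b // ∃ a, r a b} :=
    { toFun := fun a => ⟨a.2.choose, a.1, a.2.choose_spec⟩
      invFun := fun b => ⟨b.2.choose, b.1, b.2.choose_spec⟩
      left_inv := fun a => Subtype.ext <|
        hinj _ _ _ (Exists.choose_spec (p := fun x => r x a.2.choose) ⟨a.1, a.2.choose_spec⟩)
          a.2.choose_spec
      right_inv := fun b => Subtype.ext <|
        hfun _ _ _ (Exists.choose_spec (p := fun y => r b.2.choose y) ⟨b.1, b.2.choose_spec⟩)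
          b.2.choose_spec }
  exact ⟨e.extendSubtype, fun a b h => by
    rw [Equiv.extendSubtype_apply_of_mem e a ⟨b, h⟩]
    exact hfun _ _ _ (Exists.choose_spec (p := fun y => r a y) ⟨b, h⟩) h⟩

namespace FreeGroup

variable {B : Type*}

theorem toWord_adjacent_sign_eq [DecidableEq B] (g : FreeGroup B) {i : ℕ} {b : B} {t t' : Bool}
    (h : g.toWord[i]? = some (b, t)) (h' : g.toWord[i + 1]? = some (b, t')) : t = t' := by
  obtain ⟨hi, hb⟩ := List.getElem?_eq_some_iff.1 h
  obtain ⟨hi', hb'⟩ := List.getElem?_eq_some_iff.1 h'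
  have := List.isChain_iff_getElem.1 isReduced_toWord i hi'
  rw [hb, hb'] at this
  exact this rfl

/-- Reducedness of `g.toWord` makes the prescriptions `i + 1 ↦ i` compatible. -/
theorem exists_perm_toWord_step [DecidableEq B] (g : FreeGroup B) :
    ∃ σ : B → Equiv.Perm (Fin (g.toWord.length + 1)), ∀ (i : ℕ) (hi : i < g.toWord.length),
      (bif g.toWord[i].2 then σ g.toWord[i].1 else (σ g.toWord[i].1)⁻¹) ⟨i + 1, by omega⟩ =
        ⟨i, by omega⟩ := by
  set L := g.toWord
  let r (b : B) (j k : Fin (L.length + 1)) : Prop :=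
    (j.1 = k.1 + 1 ∧ L[k.1]? = some (b, true)) ∨ (k.1 = j.1 + 1 ∧ L[j.1]? = some (b, false))
  have hr : ∀ b, ∃ σ : Equiv.Perm (Fin (L.length + 1)), ∀ j k, r b j k → σ j = k := by
    intro b
    apply exists_perm_of_rel
    · rintro j k k' (⟨h1, h2⟩ | ⟨h1, h2⟩) (⟨h1', h2'⟩ | ⟨h1', h2'⟩)
      · exact Fin.ext (by omega)
      · exact absurd (g.toWord_adjacent_sign_eq h2 (by rwa [← h1])) (by simp)
      · exact absurd (g.toWord_adjacent_sign_eq h2' (by rwa [← h1'])) (by simp)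
      · exact Fin.ext (by omega)
    · rintro j j' k (⟨h1, h2⟩ | ⟨h1, h2⟩) (⟨h1', h2'⟩ | ⟨h1', h2'⟩)
      · exact Fin.ext (by omega)
      · exact absurd (g.toWord_adjacent_sign_eq h2' (by rwa [← h1'])) (by simp)
      · exact absurd (g.toWord_adjacent_sign_eq h2 (by rwa [← h1])) (by simp)
      · exact Fin.ext (by omega)
  choose σ hσ using hr
  refine ⟨σ, fun i hi => ?_⟩
  rcases hx : L[i] with ⟨b, _ | _⟩
  · rw [cond_false, Equiv.Perm.inv_eq_iff_eq]
    exact (hσ b _ _ (Or.inr ⟨rfl, by rw [List.getElem?_eq_getElem hi, hx]⟩)).symm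
  · exact hσ b _ _ (Or.inl ⟨rfl, by rw [List.getElem?_eq_getElem hi, hx]⟩)

theorem exists_lift_perm_ne_one {g : FreeGroup B} (hg : g ≠ 1) :
    ∃ (n : ℕ) (σ : B → Equiv.Perm (Fin (n + 1))), lift σ g ≠ 1 := by
  classical
  obtain ⟨σ, hstep⟩ := g.exists_perm_toWord_step
  have hprefix : ∀ i (hi : i ≤ g.toWord.length),
      ((g.toWord.take i).map fun x => bif x.2 then σ x.1 else (σ x.1)⁻¹).prod
        ⟨i, by omega⟩ = 0 := by
    intro i hi
    induction i with
    | zero => rfl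
    | succ i ih =>
      rw [List.take_add_one, List.getElem?_eq_getElem (by omega)]
      simp only [Option.toList_some, List.map_append, List.prod_append, List.map_cons,
        List.map_nil, List.prod_cons, List.prod_nil, mul_one, Equiv.Perm.mul_apply]
      rw [hstep i (by omega)]
      exact ih (by omega)
  refine ⟨g.toWord.length, σ, fun h => ?_⟩
  have := hprefix g.toWord.length le_rfl
  rw [List.take_length, ← lift_mk, mk_toWord, h, Equiv.Perm.one_apply, Fin.ext_iff,
    Fin.val_zero, Fin.val_mk] at this
  exact absurd this (List.length_pos_iff.2 (mt toWord_eq_nil_iff.1 hg)).ne'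

instance : Group.ResiduallyFinite (FreeGroup B) :=
  Group.residuallyFinite_of_forall_exists_finite_monoidHom fun _ hg => by
    obtain ⟨n, σ, h⟩ := exists_lift_perm_ne_one hg
    exact ⟨_, inferInstance, inferInstance, lift σ, h⟩

/-- Free groups of finite rank are Hopfian. -/
theorem lift_injective_of_surjective {A : Type*} [Finite A] [Finite B] {f : B → FreeGroup A}
    (hf : Function.Surjective (lift f)) (hcard : Nat.card B ≤ Nat.card A) :
    Function.Injective (lift f) := by
  refine (injective_iff_map_eq_one _).2 fun g hg => by_contra fun hne => ?_
  obtain ⟨H, hgH⟩ := Group.exists_finiteIndexNormalSubgroup_notMem g hne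
  let K := FreeGroup B ⧸ H.toSubgroup
  have : Finite (FreeGroup B →* K) := Finite.of_equiv _ lift
  -- precomposition with `lift f` injects `Hom(F_A, K) ≃ K^A` into `Hom(F_B, K) ≃ K^B`
  have hbij : Function.Bijective fun φ : FreeGroup A →* K => φ.comp (lift f) := by
    refine Function.Injective.bijective_of_nat_card_le (fun φ ψ h => ?_) ?_
    · ext a
      obtain ⟨x, hx⟩ := hf (of a)
      simpa [hx] using DFunLike.congr_fun h x
    · rw [Nat.card_congr lift.symm, Nat.card_congr lift.symm, Nat.card_fun, Nat.card_fun]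
      exact Nat.pow_le_pow_right Nat.card_pos hcard
  obtain ⟨φ, hφ⟩ := hbij.2 (QuotientGroup.mk' H.toSubgroup)
  have := DFunLike.congr_fun hφ g
  simp only [MonoidHom.coe_comp, Function.comp_apply, hg] at this
  exact hgH ((QuotientGroup.eq_one_iff (N := H.toSubgroup) g).1 (this.symm.trans φ.map_one))

end FreeGroup

theorem isFreeSubset_of_closure_eq_top {A : Type*} [Finite A] {X : Set (FreeGroup A)}
    (hX : X.Finite) (htop : Subgroup.closure X = ⊤) (hcard : X.ncard ≤ Nat.card A) :
    IsFreeSubset X := by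
  have := hX.to_subtype
  refine FreeGroup.lift_injective_of_surjective ?_ (by rwa [Nat.card_coe_set_eq])
  rw [← MonoidHom.range_eq_top, FreeGroup.range_lift_eq_closure, Subtype.range_coe, htop]

end FreeGroups

section Words

variable {A : Type*} {S : Set (List A)} {w : List A}

theorem isFactor_iff_infix {u v : List A} : IsFactor u v ↔ u <:+: v := by
  constructor <;> rintro ⟨p, s, rfl⟩ <;> exact ⟨p, s, rfl⟩

namespace Factorial

variable (hS : Factorial S)
include hS

theorem mem_of_infix {u v : List A} (hv : v ∈ S) (h : u <:+: v) : u ∈ S :=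
  hS v hv u (isFactor_iff_infix.2 h)

theorem mem_of_suffix {u v : List A} (hv : v ∈ S) (h : u <:+ v) : u ∈ S :=
  hS.mem_of_infix hv h.isInfix

theorem mem_of_prefix {u v : List A} (hv : v ∈ S) (h : u <+: v) : u ∈ S :=
  hS.mem_of_infix hv h.isInfix

end Factorial

theorem UnifRecurrent.exists_infix (hur : UnifRecurrent S) (hS : Factorial S) (hw : w ∈ S) :
    ∃ n, ∀ v ∈ S, n ≤ v.length → w <:+: v := by
  obtain ⟨n, -, hn⟩ := hur.2 w hw
  refine ⟨n, fun v hv hlen => ?_⟩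
  have hsuf : v.drop (v.length - n) <:+ v := List.drop_suffix _ _
  refine (isFactor_iff_infix.1 (hn _ (hS.mem_of_suffix hv hsuf) ?_)).trans hsuf.isInfix
  simp only [List.length_drop]
  omega

theorem Biext.exists_append_mem (hS : Biext S) (hw : w ∈ S) :
    ∀ k : ℕ, ∃ p : List A, p.length = k ∧ p ++ w ∈ S
  | 0 => ⟨[], rfl, hw⟩
  | k + 1 => by
    obtain ⟨p, hp, hpw⟩ := hS.exists_append_mem hw k
    obtain ⟨a, b, hab⟩ := hS.2 _ hpw
    refine ⟨a :: p, by simp [hp], hS.1.mem_of_prefix hab ⟨[b], by simp⟩⟩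

@[simp]
theorem toFG_nil : toFG ([] : List A) = 1 := rfl

@[simp]
theorem toFG_append (u v : List A) : toFG (u ++ v) = toFG u * toFG v := by
  simp [toFG]

@[simp]
theorem toFG_singleton (a : A) : toFG [a] = FreeGroup.of a := by
  simp [toFG]

section ReturnWords

theorem mem_retWords_iff (hS : Factorial S) {x : List A} :
    x ∈ retWords S w ↔ w ++ x ∈ S ∧ x ≠ [] ∧ w <:+ w ++ x := by
  constructor
  · rintro ⟨-, hwx, y, hy, hxy⟩
    refine ⟨hwx, ?_, y, hxy.symm⟩
    rintro rfl
    exact hy (List.eq_nil_of_length_eq_zero (by simpa using congrArg List.length hxy))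
  · rintro ⟨hwx, hx, y, hy⟩
    refine ⟨hS.mem_of_suffix hwx (List.suffix_append _ _), hwx, y, ?_, hy.symm⟩
    rintro rfl
    exact hx (List.eq_nil_of_length_eq_zero (by simpa using congrArg List.length hy))

/-- Words of `S` beginning with `w` in which `w` occurs only once: the inner nodes of the tree
whose leaves are the words `w ++ x` with `x ∈ firstRet S w`. -/
def singleOcc (S : Set (List A)) (w : List A) : Set (List A) :=
  {u | u ∈ S ∧ w <+: u ∧ ∀ s, s <:+ u → w <+: s → s = u}

theorem self_mem_singleOcc (hw : w ∈ S) : w ∈ singleOcc S w :=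
  ⟨hw, List.prefix_refl w, fun _ hs hws =>
    hs.eq_of_length (le_antisymm hs.length_le hws.length_le)⟩

theorem eq_of_mem_singleOcc_of_suffix {u u' x : List A} (hu : u ∈ singleOcc S w)
    (hu' : u' ∈ singleOcc S w) (hx : u <:+ x) (hx' : u' <:+ x) : u = u' := by
  rcases List.suffix_or_suffix_of_suffix hx hx' with h | h
  · exact hu'.2.2 u h hu.2.1
  · exact (hu.2.2 u' h hu'.2.1).symm

theorem exists_mem_singleOcc_suffix (hS : Factorial S) {x : List A} (hx : x ∈ S)
    (hwx : w <+: x) : ∃ u ∈ singleOcc S w, u <:+ x := by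
  induction hlen : x.length using Nat.strong_induction_on generalizing x with
  | _ n ih =>
    by_cases hocc : ∀ s, s <:+ x → w <+: s → s = x
    · exact ⟨x, ⟨hx, hwx, hocc⟩, List.suffix_refl x⟩
    push Not at hocc
    obtain ⟨s, hsx, hws, hne⟩ := hocc
    have hlt : s.length < n := hlen ▸ lt_of_le_of_ne hsx.length_le (mt hsx.eq_of_length hne)
    obtain ⟨u, hu, hus⟩ := ih _ hlt (hS.mem_of_suffix hx hsx) hws rfl
    exact ⟨u, hu, hus.trans hsx⟩

theorem length_le_of_mem_singleOcc (hS : Factorial S) {n : ℕ}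
    (hlong : ∀ v ∈ S, n ≤ v.length → w <:+: v) {u : List A} (hu : u ∈ singleOcc S w) :
    u.length ≤ n := by
  by_contra! hlen
  obtain ⟨t, hwt, htu⟩ := List.infix_iff_prefix_suffix.1
    (hlong u.tail (hS.mem_of_suffix hu.1 (List.tail_suffix u)) (by simp; omega))
  have := hu.2.2 t (htu.trans (List.tail_suffix u)) hwt
  have := htu.length_le
  subst t
  simp at this
  omega

theorem exists_singleOcc_suffix (hS : Factorial S) {m : ℕ} {v : List A}
    (hlong : ∀ v ∈ S, m ≤ v.length → w <:+: v)
    (hv : v ∈ S) (hvl : m ≤ v.length) : ∃ t, w ++ t ∈ singleOcc S w ∧ w ++ t <:+ v := by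
  obtain ⟨x, hwx, hxv⟩ := List.infix_iff_prefix_suffix.1 (hlong v hv hvl)
  obtain ⟨_, hu, hux⟩ := exists_mem_singleOcc_suffix hS (hS.mem_of_suffix hv hxv) hwx
  obtain ⟨t, rfl⟩ := hu.2.1
  exact ⟨t, hu, hux.trans hxv⟩

theorem singleOcc_suffix_concat {u s : List A} {b : A} (hu : u ∈ singleOcc S w)
    (hs : s <:+ u ++ [b]) (hws : w <+: s) : s = u ++ [b] ∨ s = w := by
  rcases List.suffix_concat_iff.1 hs with rfl | ⟨t, rfl, htu⟩
  · exact Or.inr (List.prefix_nil.1 hws).symm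
  rcases List.prefix_concat_iff.1 hws with h | h
  · exact Or.inr h.symm
  · exact Or.inl (by rw [hu.2.2 t htu h])

theorem concat_mem_singleOcc {u : List A} {b : A} (hu : u ∈ singleOcc S w)
    (hub : u ++ [b] ∈ S) (hwub : ¬ w <:+ u ++ [b]) : u ++ [b] ∈ singleOcc S w := by
  refine ⟨hub, hu.2.1.trans (List.prefix_append _ _), fun s hs hws => ?_⟩
  rcases singleOcc_suffix_concat hu hs hws with h | rfl
  · exact h
  · exact absurd hs hwub

theorem dropLast_mem_singleOcc (hS : Factorial S) {u : List A} (hu : u ∈ singleOcc S w)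
    (hne : u ≠ w) : u.dropLast ∈ singleOcc S w := by
  obtain ⟨v, c, rfl⟩ := (List.eq_nil_or_concat' u).resolve_left (by
    rintro rfl
    exact hne (List.prefix_nil.1 hu.2.1).symm)
  rw [List.dropLast_concat]
  refine ⟨hS.mem_of_prefix hu.1 (List.prefix_append _ _),
    (List.prefix_concat_iff.1 hu.2.1).resolve_left (Ne.symm hne), fun s hs hws => ?_⟩
  exact List.append_cancel_right (hu.2.2 _ (List.suffix_concat_iff.2 (Or.inr ⟨s, rfl, hs⟩))
    (hws.trans (List.prefix_append _ _)))

end ReturnWords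

section FirstReturns

/-- A later occurrence of `w` in `w ++ x` would complete a shorter return word. -/
theorem eq_nil_of_mem_firstRet (hS : Factorial S) {x q r : List A} (hx : x ∈ firstRet S w)
    (hq : q ≠ []) (h : w ++ x = q ++ w ++ r) : r = [] := by
  rcases List.append_eq_append_iff.1 h with ⟨y, hqw, rfl⟩ | ⟨c, hw, -⟩
  · by_contra hr
    refine hx.2 ⟨y, (mem_retWords_iff hS).2 ⟨?_, ?_, q, hqw⟩, r, hr, rfl⟩
    · exact hS.mem_of_prefix hx.1.2.1 (by simp)
    · rintro rfl
      exact hq (List.eq_nil_of_length_eq_zero (by simpa using congrArg List.length hqw))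
  · have := congrArg List.length hw
    simp only [List.length_append] at this
    exact absurd (List.length_pos_iff.2 hq) (by omega)

theorem mem_firstRet_iff (hS : Factorial S) {x : List A} :
    x ∈ firstRet S w ↔
      w ++ x ∈ S ∧ x ≠ [] ∧ w <:+ w ++ x ∧ (w ++ x).dropLast ∈ singleOcc S w := by
  constructor
  · intro hx
    obtain ⟨hwx, hx0, hw⟩ := (mem_retWords_iff hS).1 hx.1
    obtain ⟨u, b, hub⟩ := (List.eq_nil_or_concat' (w ++ x)).resolve_left (by simp [hx0])
    refine ⟨hwx, hx0, hw, ?_⟩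
    rw [hub, List.dropLast_concat]
    have hwu : w <+: u := by
      rcases List.prefix_concat_iff.1 (hub ▸ List.prefix_append w x) with h | h
      · simp [h] at hub; exact absurd hub hx0
      · exact h
    refine ⟨hS.mem_of_prefix (hub ▸ hwx) (List.prefix_append _ _), hwu,
      fun s ⟨q, hq⟩ hws => ?_⟩
    obtain ⟨z, rfl⟩ := hws
    by_contra hne
    have hq0 : q ≠ [] := by rintro rfl; exact hne hq
    have := eq_nil_of_mem_firstRet hS hx hq0 (r := z ++ [b]) (by rw [hub, ← hq]; simp)
    simp at this
  · rintro ⟨hwx, hx0, hw, hd⟩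
    refine ⟨(mem_retWords_iff hS).2 ⟨hwx, hx0, hw⟩, ?_⟩
    rintro ⟨y, hy, z, hz, rfl⟩
    obtain ⟨-, hy0, q, hq⟩ := (mem_retWords_iff hS).1 hy
    obtain ⟨u, b, hub⟩ := (List.eq_nil_or_concat' (w ++ (y ++ z))).resolve_left (by simp [hz])
    rw [hub, List.dropLast_concat] at hd
    have hsuf : w ++ z <:+ u ++ [b] := ⟨q, by rw [← hub, ← List.append_assoc, hq]; simp⟩
    rcases singleOcc_suffix_concat hd hsuf (List.prefix_append _ _) with h | h
    · rw [← hub] at h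
      exact hy0 (by simpa using h)
    · exact hz (by simpa using h)

end FirstReturns

section Rauzy

/-- The edge `u →a v` of the Rauzy graph of order `n` of `S`. -/
def RauzyEdge (S : Set (List A)) (n : ℕ) (u : List A) (a : A) (v : List A) : Prop :=
  u.length = n ∧ u ++ [a] ∈ S ∧ v = (u ++ [a]).tail

/-- Paths in the Rauzy graph of order `n` that may also run along edges backwards, labelled by
the element of the free group that they spell. -/
inductive RauzyPath (S : Set (List A)) (n : ℕ) : List A → FreeGroup A → List A → Prop
  | nil {u : List A} (hu : u ∈ S) (hlen : u.length = n) : RauzyPath S n u 1 u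
  | fwd {u v v' : List A} {g : FreeGroup A} {a : A} (p : RauzyPath S n u g v)
      (e : RauzyEdge S n v a v') : RauzyPath S n u (g * FreeGroup.of a) v'
  | bwd {u v v' : List A} {g : FreeGroup A} {a : A} (p : RauzyPath S n u g v)
      (e : RauzyEdge S n v' a v) : RauzyPath S n u (g * (FreeGroup.of a)⁻¹) v'

variable {n : ℕ} {u v x y : List A} {a : A} {g h : FreeGroup A}

theorem RauzyEdge.source_mem (hS : Factorial S) (e : RauzyEdge S n u a v) :
    u ∈ S ∧ u.length = n :=
  ⟨hS.mem_of_prefix e.2.1 (List.prefix_append _ _), e.1⟩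

theorem RauzyEdge.target_mem (hS : Factorial S) (e : RauzyEdge S n u a v) :
    v ∈ S ∧ v.length = n := by
  obtain ⟨hu, hua, rfl⟩ := e
  exact ⟨hS.mem_of_suffix hua (List.tail_suffix _), by simp [hu]⟩

theorem RauzyEdge.toPath (hS : Factorial S) (e : RauzyEdge S n u a v) :
    RauzyPath S n u (FreeGroup.of a) v := by
  simpa using (RauzyPath.nil (e.source_mem hS).1 (e.source_mem hS).2).fwd e

theorem RauzyEdge.toPath_inv (hS : Factorial S) (e : RauzyEdge S n u a v) :
    RauzyPath S n v (FreeGroup.of a)⁻¹ u := by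
  simpa using (RauzyPath.nil (e.target_mem hS).1 (e.target_mem hS).2).bwd e

theorem RauzyEdge.exists_lift (hS : Biext S) (e : RauzyEdge S n u a v) :
    ∃ d, RauzyEdge S (n + 1) (d :: u) a (u ++ [a]) := by
  obtain ⟨d, b, hdb⟩ := hS.2 _ e.2.1
  exact ⟨d, by simp [e.1], hS.1.mem_of_prefix hdb ⟨[b], by simp⟩, by simp⟩

theorem RauzyPath.target_mem (hS : Factorial S) (p : RauzyPath S n u g v) :
    v ∈ S ∧ v.length = n := by
  induction p with
  | nil hu hlen => exact ⟨hu, hlen⟩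
  | fwd _ e _ => exact e.target_mem hS
  | bwd _ e _ => exact e.source_mem hS

theorem RauzyPath.trans (p : RauzyPath S n u g v) (q : RauzyPath S n v h x) :
    RauzyPath S n u (g * h) x := by
  induction q with
  | nil => simpa using p
  | fwd _ e ih => simpa [mul_assoc] using ih.fwd e
  | bwd _ e ih => simpa [mul_assoc] using ih.bwd e

theorem RauzyPath.symm (hS : Factorial S) (p : RauzyPath S n u g v) :
    RauzyPath S n v g⁻¹ u := by
  induction p with
  | nil hu hlen => simpa using RauzyPath.nil (S := S) hu hlen
  | fwd _ e ih => simpa using (e.toPath_inv hS).trans ih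
  | bwd _ e ih => simpa using (e.toPath hS).trans ih

end Rauzy

section ExtensionGraph

variable {n : ℕ} {u x y : List A}

/-- A vertex `a` or `b` of `E(u)` stands for the vertex `au` or `ub` of the Rauzy graph of order
`|u| + 1`; a walk in `E(u)` becomes a path between these words whose label is read off with
`extLabel`. -/
def extWord (S : Set (List A)) (u : List A) :
    ↥(leftExts S (letterWords A) u) ⊕ ↥(rightExts S (letterWords A) u) → List A :=
  Sum.elim (fun l => l.1 ++ u) (fun r => u ++ r.1)

def extLabel (S : Set (List A)) (u : List A) :
    ↥(leftExts S (letterWords A) u) ⊕ ↥(rightExts S (letterWords A) u) → FreeGroup A :=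
  Sum.elim (fun _ => 1) (fun r => toFG r.1)

theorem rauzyPath_of_extGraph_adj (hS : Factorial S) (hun : u.length = n)
    {p q : ↥(leftExts S (letterWords A) u) ⊕ ↥(rightExts S (letterWords A) u)}
    (h : (EGraph S u).Adj p q) :
    RauzyPath S (n + 1) (extWord S u p) ((extLabel S u p)⁻¹ * extLabel S u q)
      (extWord S u q) := by
  have edge : ∀ (l : ↥(leftExts S (letterWords A) u)) (r : ↥(rightExts S (letterWords A) u)),
      l.1 ++ u ++ r.1 ∈ S → RauzyPath S (n + 1) (l.1 ++ u) (toFG r.1) (u ++ r.1) := by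
    rintro ⟨_, ⟨a, rfl⟩, _⟩ ⟨_, ⟨b, rfl⟩, _⟩ hlr
    rw [toFG_singleton]
    exact RauzyEdge.toPath hS ⟨by simp [hun], hlr, by simp⟩
  rcases h with ⟨l, r, rfl, rfl, hlr⟩ | ⟨l, r, rfl, rfl, hlr⟩
  · simpa [extWord, extLabel] using edge l r hlr
  · simpa [extWord, extLabel] using (edge l r hlr).symm hS

theorem rauzyPath_of_extGraph_reachable (hS : Factorial S) (hun : u.length = n)
    {p q : ↥(leftExts S (letterWords A) u) ⊕ ↥(rightExts S (letterWords A) u)}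
    (h : (EGraph S u).Reachable p q) :
    RauzyPath S (n + 1) (extWord S u p) ((extLabel S u p)⁻¹ * extLabel S u q)
      (extWord S u q) := by
  rw [SimpleGraph.reachable_iff_reflTransGen] at h
  induction h with
  | refl =>
    rcases p with ⟨l, ⟨a, rfl⟩, hl⟩ | ⟨r, ⟨b, rfl⟩, hr⟩
    · simpa [extWord] using RauzyPath.nil (S := S) hl (by simp [hun])
    · simpa [extWord] using RauzyPath.nil (S := S) hr (by simp [hun])
  | tail _ hadj ih =>
    simpa [mul_assoc] using ih.trans (rauzyPath_of_extGraph_adj hS hun hadj)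

theorem rauzyPath_of_tail_eq (hS : SConn S) (hx : x ∈ S) (hy : y ∈ S)
    (hxl : x.length = n + 1) (hyl : y.length = n + 1) (hxy : x.tail = y.tail) :
    RauzyPath S (n + 1) x 1 y := by
  obtain ⟨a, x, rfl⟩ := List.exists_cons_of_length_eq_add_one hxl
  obtain ⟨b, y, rfl⟩ := List.exists_cons_of_length_eq_add_one hyl
  simp only [List.tail_cons] at hxy
  subst hxy
  have hxS := hS.1.1.mem_of_suffix hx (List.suffix_cons a x)
  let p : ↥(leftExts S (letterWords A) x) ⊕ ↥(rightExts S (letterWords A) x) :=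
    .inl ⟨[a], ⟨a, rfl⟩, hx⟩
  let q : ↥(leftExts S (letterWords A) x) ⊕ ↥(rightExts S (letterWords A) x) :=
    .inl ⟨[b], ⟨b, rfl⟩, hy⟩
  simpa [p, q, extWord, extLabel] using rauzyPath_of_extGraph_reachable hS.1.1
    (by simpa using hxl) ((hS.2 x hxS).preconnected p q)

end ExtensionGraph

section Generation

variable {m n : ℕ} {u v x : List A} {a : A} {g : FreeGroup A}

theorem RauzyPath.exists_lift (hS : SConn S) (p : RauzyPath S n u g v) (hx : x ∈ S)
    (hxl : x.length = n + 1) (hxu : x.tail = u) :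
    ∃ y, y.tail = v ∧ RauzyPath S (n + 1) x g y := by
  induction p with
  | nil => exact ⟨x, hxu, .nil hx hxl⟩
  | @fwd v _ _ a _ e ih =>
    obtain ⟨y, hyv, hxy⟩ := ih
    obtain ⟨d, e'⟩ := e.exists_lift hS.1
    have hy := hxy.target_mem hS.1.1
    have hd := e'.source_mem hS.1.1
    refine ⟨v ++ [a], e.2.2.symm, ?_⟩
    simpa using (hxy.trans (rauzyPath_of_tail_eq hS hy.1 hd.1 hy.2 hd.2 (by simp [hyv]))).fwd e'
  | @bwd _ v' _ a _ e ih =>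
    obtain ⟨y, hyv, hxy⟩ := ih
    obtain ⟨d, e'⟩ := e.exists_lift hS.1
    have hy := hxy.target_mem hS.1.1
    have hd := e'.target_mem hS.1.1
    refine ⟨d :: v', rfl, ?_⟩
    simpa using
      (hxy.trans (rauzyPath_of_tail_eq hS hy.1 hd.1 hy.2 hd.2 (by rw [hyv, e.2.2]))).bwd e'

theorem rauzyPath_loop (hS : SConn S) (hA : ∀ a : A, [a] ∈ S) :
    ∀ (n : ℕ) {u : List A}, u ∈ S → u.length = n → ∀ g, RauzyPath S n u g u
  | 0, u, hu, hlen, g => by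
    obtain rfl := List.eq_nil_of_length_eq_zero hlen
    induction g using FreeGroup.induction_on with
    | C1 => exact .nil hu rfl
    | of a => exact RauzyEdge.toPath hS.1.1 ⟨rfl, hA a, rfl⟩
    | inv_of a h => simpa using h.symm hS.1.1
    | mul g h hg hh => exact hg.trans hh
  | n + 1, x, hx, hlen, g => by
    have hu := hS.1.1.mem_of_suffix hx (List.tail_suffix x)
    obtain ⟨y, hyx, hxy⟩ :=
      (rauzyPath_loop hS hA n hu (by simp [hlen]) g).exists_lift hS hx hlen rfl
    have hy := hxy.target_mem hS.1.1
    simpa using hxy.trans (rauzyPath_of_tail_eq hS hy.1 hx hy.2 hlen hyx)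

/-- `w ++ s` and `w ++ t` are the suffixes of `u` and `v` starting at the last occurrence of
`w`. -/
theorem RauzyEdge.transfer (hS : Factorial S) (hlong : ∀ v ∈ S, m ≤ v.length → w <:+: v)
    (hmn : m ≤ n) {s t : List A} (e : RauzyEdge S n u a v)
    (hs : w ++ s ∈ singleOcc S w) (hsu : w ++ s <:+ u)
    (ht : w ++ t ∈ singleOcc S w) (htv : w ++ t <:+ v) :
    toFG s * FreeGroup.of a * (toFG t)⁻¹ ∈ Subgroup.closure (toFG '' firstRet S w) := by
  obtain ⟨hun, hua, rfl⟩ := e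
  have hvT : (u ++ [a]).tail <:+ u ++ [a] := List.tail_suffix _
  have hvl : (u ++ [a]).tail.length = n := by simp [hun]
  have hsa : w ++ s ++ [a] <:+ u ++ [a] := List.suffix_concat_iff.2 (Or.inr ⟨_, rfl, hsu⟩)
  have hsaS : w ++ s ++ [a] ∈ S := hS.mem_of_suffix hua hsa
  by_cases hret : w <:+ w ++ s ++ [a]
  · have hx : s ++ [a] ∈ firstRet S w :=
      (mem_firstRet_iff hS).2
        ⟨by simpa using hsaS, by simp, by simpa using hret, by simpa using hs⟩
    have hw : w ∈ singleOcc S w :=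
      self_mem_singleOcc (hS.mem_of_prefix hs.1 (List.prefix_append _ _))
    have hwv : w <:+ (u ++ [a]).tail := List.suffix_of_suffix_length_le (hret.trans hsa) hvT
      (by have := length_le_of_mem_singleOcc hS hlong hw; omega)
    obtain rfl : t = [] := by simpa using eq_of_mem_singleOcc_of_suffix ht hw htv hwv
    exact Subgroup.subset_closure ⟨s ++ [a], hx, by simp⟩
  · have hsa' := concat_mem_singleOcc hs hsaS hret
    have hsav : w ++ s ++ [a] <:+ (u ++ [a]).tail := List.suffix_of_suffix_length_le hsa hvT
      (by have := length_le_of_mem_singleOcc hS hlong hsa'; omega)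
    obtain rfl : t = s ++ [a] := by simpa using eq_of_mem_singleOcc_of_suffix ht hsa' htv hsav
    simp

theorem RauzyPath.transfer (hS : Factorial S) (hlong : ∀ v ∈ S, m ≤ v.length → w <:+: v)
    (hmn : m ≤ n) (p : RauzyPath S n u g v) {s : List A} (hs : w ++ s ∈ singleOcc S w)
    (hsu : w ++ s <:+ u) {t : List A} (ht : w ++ t ∈ singleOcc S w) (htv : w ++ t <:+ v) :
    toFG s * g * (toFG t)⁻¹ ∈ Subgroup.closure (toFG '' firstRet S w) := by
  induction p generalizing t with
  | nil =>
    obtain rfl : t = s := by simpa using eq_of_mem_singleOcc_of_suffix ht hs htv hsu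
    simp
  | fwd _ e ih =>
    have hv := e.source_mem hS
    obtain ⟨t', ht', ht'v⟩ := exists_singleOcc_suffix hS hlong hv.1 (hv.2 ▸ hmn)
    convert mul_mem (ih ht' ht'v) (e.transfer hS hlong hmn ht' ht'v ht htv) using 1
    group
  | bwd _ e ih =>
    have hv := e.target_mem hS
    obtain ⟨t', ht', ht'v⟩ := exists_singleOcc_suffix hS hlong hv.1 (hv.2 ▸ hmn)
    convert mul_mem (ih ht' ht'v) (inv_mem (e.transfer hS hlong hmn ht htv ht' ht'v)) using 1
    group

theorem closure_toFG_firstRet_eq_top (hS : SConn S) (hA : ∀ a : A, [a] ∈ S) (hw : w ∈ S)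
    (hlong : ∀ v ∈ S, m ≤ v.length → w <:+: v) :
    Subgroup.closure (toFG '' firstRet S w) = ⊤ := by
  obtain ⟨p, hp, hpw⟩ := hS.1.exists_append_mem hw m
  have hwI : w ++ [] ∈ singleOcc S w := by simpa using self_mem_singleOcc hw
  have hwp : w ++ [] <:+ p ++ w := by simp
  refine (Subgroup.eq_top_iff' _).2 fun g => ?_
  simpa using
    (rauzyPath_loop hS hA _ hpw rfl g).transfer hS.1.1 hlong (by simp [hp]) hwI hwp hwI hwp

end Generation

section Neutral

theorem leftExts_letterWords (v : List A) :
    leftExts S (letterWords A) v = (fun a => [a]) '' {a | a :: v ∈ S} := by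
  ext l
  simp only [leftExts, letterWords, Set.mem_ofPred_eq, Set.mem_range, Set.mem_image]
  constructor
  · rintro ⟨⟨a, rfl⟩, h⟩
    exact ⟨a, h, rfl⟩
  · rintro ⟨a, h, rfl⟩
    exact ⟨⟨a, rfl⟩, h⟩

theorem rightExts_letterWords (v : List A) :
    rightExts S (letterWords A) v = (fun b => [b]) '' {b | v ++ [b] ∈ S} := by
  ext r
  simp only [rightExts, letterWords, Set.mem_ofPred_eq, Set.mem_range, Set.mem_image]
  constructor
  · rintro ⟨⟨b, rfl⟩, h⟩
    exact ⟨b, h, rfl⟩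
  · rintro ⟨b, h, rfl⟩
    exact ⟨⟨b, rfl⟩, h⟩

theorem card_edgeSet_eGraph (hS : Factorial S) (v : List A) :
    Nat.card (EGraph S v).edgeSet = {p : A × A | p.1 :: (v ++ [p.2]) ∈ S}.ncard := by
  rw [← Nat.card_coe_set_eq]
  symm
  refine Nat.card_eq_of_bijective (fun p => ⟨s(.inl ⟨[p.1.1], ⟨_, rfl⟩,
      hS.mem_of_prefix p.2 ⟨[p.1.2], by simp⟩⟩, .inr ⟨[p.1.2], ⟨_, rfl⟩,
      hS.mem_of_suffix p.2 ⟨[p.1.1], by simp⟩⟩), .inl ⟨_, _, rfl, rfl, p.2⟩⟩)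
    ⟨?_, fun e => ?_⟩
  · rintro ⟨⟨a, b⟩, hp⟩ ⟨⟨a', b'⟩, hq⟩ h
    replace h := congrArg Subtype.val h
    simp only [Sym2.eq_iff] at h
    rcases h with ⟨h1, h2⟩ | ⟨h1, -⟩
    · obtain rfl : a = a' := by simpa using congrArg Subtype.val (Sum.inl_injective h1)
      obtain rfl : b = b' := by simpa using congrArg Subtype.val (Sum.inr_injective h2)
      rfl
    · exact absurd h1 (by simp)
  · obtain ⟨e, he⟩ := e
    induction e using Sym2.ind with
    | _ x y =>
    rw [SimpleGraph.mem_edgeSet] at he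
    rcases he with ⟨⟨_, ⟨a, rfl⟩, _⟩, ⟨_, ⟨b, rfl⟩, _⟩, rfl, rfl, h⟩ |
      ⟨⟨_, ⟨a, rfl⟩, _⟩, ⟨_, ⟨b, rfl⟩, _⟩, rfl, rfl, h⟩
    · exact ⟨⟨(a, b), by simpa using h⟩, rfl⟩
    · exact ⟨⟨(a, b), by simpa using h⟩, Subtype.ext Sym2.eq_swap⟩

theorem STree.sConn (hS : STree S) : SConn S :=
  ⟨hS.1, fun v hv => (hS.2 v hv).connected⟩

theorem STree.sNeutral [Finite A] (hS : STree S) : SNeutral S := by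
  refine ⟨hS.1.1, fun v hv => ?_⟩
  have : Finite (leftExts S (letterWords A) v) := by
    rw [leftExts_letterWords]; exact Set.toFinite _
  have : Finite (rightExts S (letterWords A) v) := by
    rw [rightExts_letterWords]; exact Set.toFinite _
  have := (SimpleGraph.isTree_iff_connected_and_card.1 (hS.2 v hv)).2
  rw [Nat.card_sum, card_edgeSet_eGraph hS.1.1, Nat.card_coe_set_eq,
    Nat.card_coe_set_eq, leftExts_letterWords, rightExts_letterWords,
    Set.ncard_image_of_injective _ List.singleton_injective,
    Set.ncard_image_of_injective _ List.singleton_injective] at this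
  simp only [mval]
  omega

end Neutral

section Counting

open Finset

variable [Fintype A] {v x : List A}

open Classical in
noncomputable def leftLetters (S : Set (List A)) (v : List A) : Finset A := {a | a :: v ∈ S}

open Classical in
noncomputable def rightLetters (S : Set (List A)) (v : List A) : Finset A := {b | v ++ [b] ∈ S}

theorem mem_leftLetters {a : A} : a ∈ leftLetters S v ↔ a :: v ∈ S := by
  simp [leftLetters]

theorem mem_rightLetters {b : A} : b ∈ rightLetters S v ↔ v ++ [b] ∈ S := by
  simp [rightLetters]

theorem ncard_biextensions (hS : Factorial S) (v : List A) :
    {p : A × A | p.1 :: (v ++ [p.2]) ∈ S}.ncard =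
      ∑ a ∈ leftLetters S v, #(rightLetters S (a :: v)) := by
  classical
  rw [Set.ncard_eq_toFinset_card', Set.toFinset_ofPred, card_filter, ← univ_product_univ,
    sum_product]
  refine (sum_subset (subset_univ _) fun a _ ha => ?_).symm.trans (sum_congr rfl fun a _ => ?_)
  · refine sum_eq_zero fun b _ => if_neg fun hb => ha (mem_leftLetters.2 ?_)
    exact hS.mem_of_prefix hb ⟨[b], by simp⟩
  · simp only [rightLetters, card_filter, List.cons_append]

theorem SNeutral.sum_card_rightLetters (hS : SNeutral S) (hv : v ∈ S) :
    ∑ a ∈ leftLetters S v, ((#(rightLetters S (a :: v)) : ℤ) - 1) =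
      #(rightLetters S v) - 1 := by
  have h := hS.2 v hv
  have hl : {a : A | a :: v ∈ S}.ncard = #(leftLetters S v) := by
    rw [← Set.ncard_coe_finset]; congr 1; ext; simp [mem_leftLetters]
  have hr : {b : A | v ++ [b] ∈ S}.ncard = #(rightLetters S v) := by
    rw [← Set.ncard_coe_finset]; congr 1; ext; simp [mem_rightLetters]
  rw [mval, ncard_biextensions hS.1, hl, hr] at h
  push_cast at h
  rw [sum_sub_distrib, sum_const, nsmul_one]
  linarith

open Classical in
noncomputable def leftExtensions (S : Set (List A)) : ℕ → List A → Finset (List A)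
  | 0, v => {v}
  | k + 1, v => (leftLetters S v).biUnion fun a => leftExtensions S k (a :: v)

theorem mem_leftExtensions (hS : Factorial S) (k : ℕ) (hv : v ∈ S) :
    x ∈ leftExtensions S k v ↔ x ∈ S ∧ x.length = k + v.length ∧ v <:+ x := by
  induction k generalizing v with
  | zero =>
    simp only [leftExtensions, Finset.mem_singleton, zero_add]
    refine ⟨by rintro rfl; exact ⟨hv, rfl, List.suffix_refl _⟩, fun ⟨_, hl, hvx⟩ => ?_⟩
    exact (hvx.eq_of_length hl.symm).symm
  | succ k ih =>
    simp only [leftExtensions, mem_biUnion, mem_leftLetters]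
    constructor
    · rintro ⟨a, ha, hx⟩
      obtain ⟨hxS, hl, hax⟩ := (ih ha).1 hx
      exact ⟨hxS, by simp at hl; omega, (List.suffix_cons a v).trans hax⟩
    · rintro ⟨hxS, hl, p, rfl⟩
      obtain ⟨p, a, rfl⟩ := (List.eq_nil_or_concat' p).resolve_left (by rintro rfl; simp at hl)
      have hax : a :: v <:+ p ++ [a] ++ v := ⟨p, by simp⟩
      have haS := hS.mem_of_suffix hxS hax
      exact ⟨a, haS, (ih haS).2 ⟨hxS, by simp at hl ⊢; omega, hax⟩⟩

open Classical in
theorem SNeutral.sum_leftExtensions (hS : SNeutral S) :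
    ∀ (k : ℕ) {v : List A}, v ∈ S →
      ∑ x ∈ leftExtensions S k v, ((#(rightLetters S x) : ℤ) - 1) = #(rightLetters S v) - 1
  | 0, v, _ => by simp [leftExtensions]
  | k + 1, v, hv => by
    rw [leftExtensions, sum_biUnion]
    · rw [sum_congr rfl fun a ha => hS.sum_leftExtensions k (mem_leftLetters.1 ha)]
      exact hS.sum_card_rightLetters hv
    · intro a ha a' ha' hne
      refine disjoint_left.2 fun x hx hx' => hne ?_
      have h := (mem_leftExtensions hS.1 k (mem_leftLetters.1 ha)).1 hx
      have h' := (mem_leftExtensions hS.1 k (mem_leftLetters.1 ha')).1 hx'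
      exact (List.cons_eq_cons.1 ((List.suffix_of_suffix_length_le h.2.2 h'.2.2
        (by simp)).eq_of_length (by simp))).1

end Counting

section ReturnCount

open Finset

variable [Fintype A] {m : ℕ}

theorem finite_singleOcc (hS : Factorial S) (hlong : ∀ v ∈ S, m ≤ v.length → w <:+: v) :
    (singleOcc S w).Finite :=
  (List.finite_length_le A m).subset fun _ hu => length_le_of_mem_singleOcc hS hlong hu

theorem finite_firstRet (hS : Factorial S) (hlong : ∀ v ∈ S, m ≤ v.length → w <:+: v) :
    (firstRet S w).Finite :=
  (List.finite_length_le A (m + 1)).subset fun x hx => by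
    have h := length_le_of_mem_singleOcc hS hlong ((mem_firstRet_iff hS).1 hx).2.2.2
    simp only [List.length_dropLast, List.length_append] at h
    exact (by omega : x.length ≤ m + 1)

open Classical in
theorem biUnion_image_rightLetters_singleOcc (hS : Factorial S) (hI : (singleOcc S w).Finite)
    (hR : (firstRet S w).Finite) :
    hI.toFinset.biUnion (fun u => (rightLetters S u).image (u ++ [·])) =
      hI.toFinset.erase w ∪ hR.toFinset.image (w ++ ·) := by
  ext c
  simp only [mem_biUnion, mem_image, mem_union, mem_erase, Set.Finite.mem_toFinset,
    mem_rightLetters]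
  constructor
  · rintro ⟨u, hu, b, hb, rfl⟩
    by_cases hret : w <:+ u ++ [b]
    · obtain ⟨t, rfl⟩ := hu.2.1
      exact Or.inr ⟨t ++ [b], (mem_firstRet_iff hS).2
        ⟨by simpa using hb, by simp, by simpa using hret, by simpa using hu⟩, by simp⟩
    · refine Or.inl ⟨fun h => ?_, concat_mem_singleOcc hu hb hret⟩
      have := hu.2.1.length_le
      simp [← h] at this
  · rintro (⟨hne, hc⟩ | ⟨x, hx, rfl⟩)
    · have hc0 : c ≠ [] := by rintro rfl; exact hne (List.prefix_nil.1 hc.2.1).symm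
      have hsplit := List.dropLast_append_getLast hc0
      exact ⟨_, dropLast_mem_singleOcc hS hc hne, _, by rw [hsplit]; exact hc.1, hsplit⟩
    · obtain ⟨hwx, hx0, -, hd⟩ := (mem_firstRet_iff hS).1 hx
      have hsplit := List.dropLast_append_getLast (by simp [hx0] : w ++ x ≠ [])
      exact ⟨_, hd, _, by rw [hsplit]; exact hwx, hsplit⟩

open Classical in
/-- Counting the edges of the tree with inner nodes `singleOcc S w` and leaves `w ++ firstRet S w`
by their lower ends. -/
theorem sum_card_rightLetters_singleOcc (hS : Factorial S) (hw : w ∈ S)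
    (hI : (singleOcc S w).Finite) (hR : (firstRet S w).Finite) :
    ∑ u ∈ hI.toFinset, ((#(rightLetters S u) : ℤ) - 1) = #hR.toFinset - 1 := by
  have hwJ : w ∈ hI.toFinset := hI.mem_toFinset.2 (self_mem_singleOcc hw)
  have hdisj : Disjoint (hI.toFinset.erase w) (hR.toFinset.image (w ++ ·)) := by
    refine disjoint_left.2 fun c hc hc' => ?_
    obtain ⟨x, hx, rfl⟩ := mem_image.1 hc'
    have hx := (mem_firstRet_iff hS).1 (hR.mem_toFinset.1 hx)
    have hc := hI.mem_toFinset.1 (mem_of_mem_erase hc)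
    exact hx.2.1 (by simpa using (hc.2.2 w hx.2.2.1 (List.prefix_refl w)).symm)
  have hpd : (hI.toFinset : Set (List A)).PairwiseDisjoint
      fun u => (rightLetters S u).image (u ++ [·]) := by
    intro u _ u' _ hne
    refine disjoint_left.2 fun c hc hc' => hne ?_
    obtain ⟨b, -, rfl⟩ := mem_image.1 hc
    obtain ⟨b', -, h⟩ := mem_image.1 hc'
    exact (List.append_inj' h rfl).1.symm
  have hsum : ∑ u ∈ hI.toFinset, #(rightLetters S u) = #hI.toFinset - 1 + #hR.toFinset := by
    rw [← card_erase_of_mem hwJ,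
      ← card_image_of_injective hR.toFinset fun _ _ => List.append_cancel_left (as := w),
      ← card_union_of_disjoint hdisj, ← biUnion_image_rightLetters_singleOcc hS hI hR,
      card_biUnion hpd]
    exact sum_congr rfl fun u _ => (card_image_of_injective _ fun b b' h => by simpa using h).symm
  have hJ : 1 ≤ #hI.toFinset := card_pos.2 ⟨w, hwJ⟩
  rw [sum_sub_distrib, sum_const, nsmul_one, ← Nat.cast_sum, hsum]
  push_cast [Nat.cast_sub hJ]
  ring

open Classical in
theorem sum_leftExtensions_eq_sum_singleOcc (hS : Factorial S) (hw : w ∈ S)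
    (hlong : ∀ v ∈ S, m ≤ v.length → w <:+: v) (hI : (singleOcc S w).Finite)
    (f : List A → ℤ) :
    ∑ x ∈ leftExtensions S m [], f x =
      ∑ u ∈ hI.toFinset, ∑ x ∈ leftExtensions S (m - u.length) u, f x := by
  have hnil : [] ∈ S := hS.mem_of_prefix hw List.nil_prefix
  have hle : ∀ u ∈ singleOcc S w, u.length ≤ m := fun u hu =>
    length_le_of_mem_singleOcc hS hlong hu
  rw [← sum_biUnion]
  · congr 1
    ext x
    simp only [mem_biUnion, Set.Finite.mem_toFinset, mem_leftExtensions hS _ hnil,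
      List.length_nil, add_zero, List.nil_suffix, and_true]
    constructor
    · rintro ⟨hx, hl⟩
      obtain ⟨t, ht, htx⟩ := exists_singleOcc_suffix hS hlong hx hl.ge
      have := hle _ ht
      exact ⟨_, ht, (mem_leftExtensions hS _ ht.1).2 ⟨hx, by omega, htx⟩⟩
    · rintro ⟨u, hu, hx⟩
      obtain ⟨hxS, hl, -⟩ := (mem_leftExtensions hS _ hu.1).1 hx
      have := hle _ hu
      exact ⟨hxS, by omega⟩
  · intro u hu u' hu' hne
    have hu := hI.mem_toFinset.1 hu
    have hu' := hI.mem_toFinset.1 hu'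
    refine disjoint_left.2 fun x hx hx' => hne ?_
    exact eq_of_mem_singleOcc_of_suffix hu hu' ((mem_leftExtensions hS _ hu.1).1 hx).2.2
      ((mem_leftExtensions hS _ hu'.1).1 hx').2.2

theorem ncard_firstRet (hS : SNeutral S) (hA : ∀ a : A, [a] ∈ S) (hw : w ∈ S)
    (hlong : ∀ v ∈ S, m ≤ v.length → w <:+: v) :
    (firstRet S w).ncard = Fintype.card A := by
  have hI := finite_singleOcc hS.1 hlong
  have hR := finite_firstRet hS.1 hlong
  have htele := hS.sum_leftExtensions m (hS.1.mem_of_prefix hw List.nil_prefix)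
  rw [sum_leftExtensions_eq_sum_singleOcc hS.1 hw hlong hI,
    sum_congr rfl fun u hu => hS.sum_leftExtensions _ (hI.mem_toFinset.1 hu).1,
    sum_card_rightLetters_singleOcc hS.1 hw hI hR] at htele
  have hA' : rightLetters S [] = univ := by ext; simp [mem_rightLetters, hA]
  rw [hA', card_univ] at htele
  rw [Set.ncard_eq_toFinset_card _ hR]
  omega

end ReturnCount

end Words

/-- **Return Theorem.** In a uniformly recurrent tree set containing the alphabet,
every set of first right return words is a basis of the free group on `A`. -/
theorem statement3 {A : Type*} [Fintype A] (S : Set (List A)) (hS : STree S)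
    (hur : UnifRecurrent S) (hA : ∀ a : A, [a] ∈ S) (w : List A) (hw : w ∈ S) :
    Subgroup.closure (toFG '' firstRet S w) = (⊤ : Subgroup (FreeGroup A)) ∧
      IsFreeSubset (toFG '' firstRet S w) := by
  obtain ⟨m, hlong⟩ := hur.exists_infix hS.1.1 hw
  have hR := finite_firstRet hS.1.1 hlong
  have htop := closure_toFG_firstRet_eq_top hS.sConn hA hw hlong
  refine ⟨htop, isFreeSubset_of_closure_eq_top (hR.image _) htop ?_⟩
  calc (toFG '' firstRet S w).ncard ≤ (firstRet S w).ncard := Set.ncard_image_le hR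
    _ = Nat.card A := by rw [ncard_firstRet hS.sNeutral hA hw hlong, Nat.card_eq_fintype_card]
end

section
/- Let S be a uniformly recurrent set over a finite alphabet A with A ⊆ S. If S is strong (resp. weak, resp. neutral), then for every w in S the set R_S(w) of first right return words to w has at least (resp. at most, resp. exactly) Card(A) elements. -/
open List

/-!
For `w = []` the first return words are the letters. Otherwise let `N` be the words of `S`
avoiding `w`, `Q` those in which `w` occurs only as a suffix, and `L` the words `w x` with
`x ∈ R_S(w)`; all three are finite since `w` is a factor of every long enough word of `S`.
Under right extension by a letter, `N ∪ Q` is a tree rooted at `[]` with internal nodes `N` and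
leaves `Q`; under left extension, `Q ∪ L` is a tree rooted at `w` with internal nodes `Q` and
leaves `L`. Counting each tree through the parent map, with `e(v) = ∑_b ℓ(vb)`, gives
`Card R_S(w) = Card L = 1 + ∑_{u ∈ Q} (ℓ(u) - 1) = Card A + ∑_{v ∈ N} m(v)`,
so the sign of `m` decides how `Card R_S(w)` compares with `Card A`.
-/

namespace FirstReturn

open Finset

variable {A : Type*}

theorem isFactor_iff_isInfix {u v : List A} : IsFactor u v ↔ u <:+: v :=
  ⟨fun ⟨p, s, h⟩ => ⟨p, s, h.symm⟩, fun ⟨p, s, h⟩ => ⟨p, s, h.symm⟩⟩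

theorem _root_.Factorial.mem_of_isInfix {S : Set (List A)} (hS : Factorial S) {u v : List A}
    (hv : v ∈ S) (h : u <:+: v) : u ∈ S :=
  hS v hv u (isFactor_iff_isInfix.mpr h)

theorem isSuffix_tail_of_length_lt {w x : List A} (h : w <:+ x) (hlt : w.length < x.length) :
    w <:+ x.tail := by
  obtain ⟨_ | ⟨c, p⟩, rfl⟩ := h
  · simp at hlt
  · exact ⟨p, rfl⟩

theorem exists_ne_nil_eq_append_iff {w l : List A} (hw : w ≠ []) :
    (∃ y, y ≠ [] ∧ l = y ++ w) ↔ w <:+ l.tail := by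
  constructor
  · rintro ⟨y, hy, rfl⟩
    exact ⟨y.tail, (tail_append_of_ne_nil hy).symm⟩
  · rintro ⟨t, ht⟩
    cases l with
    | nil => exact absurd (eq_nil_of_suffix_nil ⟨t, ht⟩) hw
    | cons c l => exact ⟨c :: t, cons_ne_nil c t, by rw [tail_cons] at ht; rw [← ht, cons_append]⟩

section Letters

open scoped Classical

variable [Fintype A] {S : Set (List A)}

variable (S) in
noncomputable def leftLetters (v : List A) : Finset A := univ.filter fun a => a :: v ∈ S

variable (S) in
noncomputable def rightLetters (v : List A) : Finset A := univ.filter fun b => v ++ [b] ∈ S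

@[simp]
theorem mem_leftLetters {a : A} {v : List A} : a ∈ leftLetters S v ↔ a :: v ∈ S := by
  simp [leftLetters]

@[simp]
theorem mem_rightLetters {b : A} {v : List A} : b ∈ rightLetters S v ↔ v ++ [b] ∈ S := by
  simp [rightLetters]

theorem ncard_setOf_eq_card (P : A → Prop) : Set.ncard {a | P a} = (univ.filter P).card := by
  rw [Set.ncard_eq_toFinset_card', Set.toFinset_ofPred]

theorem ncard_biext_eq_sum (v : List A) :
    Set.ncard {p : A × A | p.1 :: (v ++ [p.2]) ∈ S} = ∑ b, (leftLetters S (v ++ [b])).card := by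
  rw [Set.ncard_eq_toFinset_card', Set.toFinset_ofPred, card_filter, Fintype.sum_prod_type_right]
  simp only [leftLetters, card_filter]

theorem card_leftLetters_sub_one_add_mval (hS : Factorial S) (v : List A) :
    ((leftLetters S v).card - 1 : ℤ) + mval S v
      = ∑ b ∈ rightLetters S v, ((leftLetters S (v ++ [b])).card - 1 : ℤ) := by
  have hsupp : ∑ b ∈ rightLetters S v, (leftLetters S (v ++ [b])).card
      = ∑ b, (leftLetters S (v ++ [b])).card :=
    sum_filter_of_ne fun b _ hb => by
      obtain ⟨a, ha⟩ := card_ne_zero.mp hb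
      exact hS.mem_of_isInfix (mem_filter.mp ha).2 ⟨[a], [], by simp⟩
  rw [mval, ncard_biext_eq_sum, ← hsupp, ncard_setOf_eq_card, ncard_setOf_eq_card,
    sum_sub_distrib, sum_const]
  simp only [leftLetters, rightLetters, nsmul_eq_mul, mul_one]
  push_cast
  ring

end Letters

theorem sum_sum_children_eq_sum {α β M : Type*} [AddCommMonoid M] [DecidableEq α]
    {I X : Finset α} {parent : α → α} {children : α → Finset β} {child : α → β → α}
    (hparent : ∀ x ∈ X, parent x ∈ I)
    (hchildren : ∀ v ∈ I, ∀ x, x ∈ X ∧ parent x = v ↔ ∃ b ∈ children v, child v b = x)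
    (hchild : ∀ v, Function.Injective (child v)) (g : α → M) :
    ∑ v ∈ I, ∑ b ∈ children v, g (child v b) = ∑ x ∈ X, g x := by
  rw [← sum_fiberwise_of_maps_to hparent]
  refine sum_congr rfl fun v hv => ?_
  rw [← sum_image fun b _ b' _ h => hchild v h]
  congr 1
  ext x
  rw [mem_image, Finset.mem_filter, hchildren v hv]

section ReturnTree

variable {S : Set (List A)} {w u v x : List A}

def avoiders (S : Set (List A)) (w : List A) : Set (List A) := {v | v ∈ S ∧ ¬ w <:+: v}

def firstHits (S : Set (List A)) (w : List A) : Set (List A) :=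
  {u | u ∈ S ∧ w <:+ u ∧ ¬ w <:+: u.dropLast}

def completeReturns (S : Set (List A)) (w : List A) : Set (List A) :=
  {u | u ∈ S ∧ w <+: u ∧ u.tail ∈ firstHits S w}

theorem nil_mem_avoiders (hS : Factorial S) (hw : w ∈ S) (hwne : w ≠ []) :
    [] ∈ avoiders S w :=
  ⟨hS.mem_of_isInfix hw nil_infix, fun h => hwne (eq_nil_of_infix_nil h)⟩

theorem self_mem_firstHits (hw : w ∈ S) (hwne : w ≠ []) : w ∈ firstHits S w := by
  refine ⟨hw, suffix_refl w, fun h => ?_⟩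
  have := h.length_le
  have := length_pos_iff.mpr hwne
  simp only [length_dropLast] at *
  omega

theorem disjoint_avoiders_firstHits : Disjoint (avoiders S w) (firstHits S w) :=
  Set.disjoint_left.mpr fun _ hN hQ => hN.2 hQ.2.1.isInfix

theorem disjoint_firstHits_completeReturns (hwne : w ≠ []) :
    Disjoint (firstHits S w) (completeReturns S w) := by
  refine Set.disjoint_left.mpr fun u hQ hL => hQ.2.2 ?_
  obtain ⟨-, hpre, -, hsuf, -⟩ := hL
  cases u with
  | nil => exact absurd (eq_nil_of_prefix_nil hpre) hwne
  | cons c t =>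
    rw [dropLast_eq_take]
    exact (prefix_take_iff.mpr ⟨hpre, by simpa using hsuf.length_le⟩).isInfix

theorem append_singleton_mem_avoiders_union_firstHits {b : A} (hv : v ∈ avoiders S w)
    (hb : v ++ [b] ∈ S) : v ++ [b] ∈ avoiders S w ∪ firstHits S w := by
  by_cases h : w <:+: v ++ [b]
  · refine Or.inr ⟨hb, (infix_concat_iff.mp h).resolve_right hv.2, ?_⟩
    rw [dropLast_concat]
    exact hv.2
  · exact Or.inl ⟨hb, h⟩

theorem dropLast_mem_avoiders (hS : Factorial S) (hx : x ∈ avoiders S w ∪ firstHits S w) :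
    x.dropLast ∈ avoiders S w := by
  have hmem : x.dropLast ∈ S := hS.mem_of_isInfix (hx.elim (·.1) (·.1)) (dropLast_prefix x).isInfix
  rcases hx with hx | hx
  · exact ⟨hmem, fun h => hx.2 (h.trans (dropLast_prefix x).isInfix)⟩
  · exact ⟨hmem, hx.2.2⟩

theorem cons_mem_firstHits_union_completeReturns {a : A} (hwne : w ≠ [])
    (hu : u ∈ firstHits S w) (ha : a :: u ∈ S) :
    a :: u ∈ firstHits S w ∪ completeReturns S w := by
  by_cases hpre : w <+: a :: u
  · exact Or.inr ⟨ha, hpre, hu⟩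
  · have hune : u ≠ [] := by
      rintro rfl
      exact hwne (eq_nil_of_suffix_nil hu.2.1)
    refine Or.inl ⟨ha, hu.2.1.trans (suffix_cons a u), fun h => ?_⟩
    rw [dropLast_cons_of_ne_nil hune, infix_cons_iff] at h
    rcases h with h | h
    · exact hpre (h.trans ((prefix_cons_inj a).mpr (dropLast_prefix u)))
    · exact hu.2.2 h

theorem tail_mem_firstHits (hS : Factorial S) (hx : x ∈ firstHits S w ∪ completeReturns S w)
    (hxw : x ≠ w) : x.tail ∈ firstHits S w := by
  rcases hx with hx | hx
  · have hlt : w.length < x.length :=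
      lt_of_le_of_ne hx.2.1.length_le fun h => hxw (hx.2.1.eq_of_length h).symm
    refine ⟨hS.mem_of_isInfix hx.1 (tail_suffix x).isInfix,
      isSuffix_tail_of_length_lt hx.2.1 hlt, fun h => hx.2.2 ?_⟩
    rw [← tail_dropLast] at h
    exact h.trans (tail_suffix _).isInfix
  · exact hx.2.2

section Bounded

variable {n : ℕ} (hS : Factorial S) (hn : ∀ v ∈ S, v.length = n → IsFactor w v)
include hS hn

theorem length_lt_of_mem_avoiders (hv : v ∈ avoiders S w) : v.length < n := by
  by_contra! h
  have hpre := take_prefix n v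
  have hfac := hn _ (hS.mem_of_isInfix hv.1 hpre.isInfix) (length_take_of_le h)
  exact hv.2 ((isFactor_iff_isInfix.mp hfac).trans hpre.isInfix)

theorem length_le_of_mem_firstHits (hu : u ∈ firstHits S w) : u.length ≤ n := by
  have := length_lt_of_mem_avoiders hS hn (dropLast_mem_avoiders hS (Or.inr hu))
  rw [length_dropLast] at this
  omega

theorem avoiders_finite [Finite A] : (avoiders S w).Finite :=
  (List.finite_length_lt A n).subset fun _ => length_lt_of_mem_avoiders hS hn

theorem firstHits_finite [Finite A] : (firstHits S w).Finite :=
  (List.finite_length_le A n).subset fun _ => length_le_of_mem_firstHits hS hn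

theorem completeReturns_finite [Finite A] : (completeReturns S w).Finite :=
  (List.finite_length_le A (n + 1)).subset fun u hu => by
    have := length_le_of_mem_firstHits hS hn hu.2.2
    rw [length_tail] at this
    exact Nat.sub_le_iff_le_add.mp this

end Bounded

end ReturnTree

section Counting

open scoped Classical

variable [Fintype A] {S : Set (List A)} {w : List A} (hS : Factorial S) (hw : w ∈ S)
  (hwne : w ≠ [])
include hS hw hwne

theorem sum_firstHits_card_leftLetters_sub_one (hA : ∀ a : A, [a] ∈ S)
    (hN : (avoiders S w).Finite) (hQ : (firstHits S w).Finite) :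
    ∑ u ∈ hQ.toFinset, ((leftLetters S u).card - 1 : ℤ)
      = Fintype.card A - 1 + ∑ v ∈ hN.toFinset, mval S v := by
  have hnil : [] ∈ hN.toFinset := hN.mem_toFinset.mpr (nil_mem_avoiders hS hw hwne)
  have hforest := sum_sum_children_eq_sum (I := hN.toFinset)
    (X := (hN.toFinset ∪ hQ.toFinset).erase []) (parent := dropLast)
    (children := rightLetters S) (child := fun v b => v ++ [b]) ?_ ?_ ?_
    (fun x => ((leftLetters S x).card - 1 : ℤ))
  · rw [← sum_congr rfl fun v _ => card_leftLetters_sub_one_add_mval hS v, sum_add_distrib,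
      sum_erase_eq_sub (mem_union_left _ hnil),
      sum_union (hN.disjoint_toFinset.mpr disjoint_avoiders_firstHits)] at hforest
    have hl : leftLetters S [] = univ := by ext a; simp [hA a]
    rw [hl, card_univ] at hforest
    linarith
  · intro x hx
    simp only [mem_erase, mem_union, Set.Finite.mem_toFinset] at hx ⊢
    exact dropLast_mem_avoiders hS hx.2
  · intro v hv x
    rw [hN.mem_toFinset] at hv
    simp only [mem_erase, mem_union, Set.Finite.mem_toFinset, mem_rightLetters]
    constructor
    · rintro ⟨⟨hne, hx⟩, rfl⟩
      refine ⟨x.getLast hne, ?_, dropLast_append_getLast hne⟩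
      rw [dropLast_append_getLast hne]
      exact hx.elim (·.1) (·.1)
    · rintro ⟨b, hb, rfl⟩
      exact ⟨⟨by simp, append_singleton_mem_avoiders_union_firstHits hv hb⟩, dropLast_concat ..⟩
  · intro v b b' h
    simpa using h

theorem card_completeReturns (hQ : (firstHits S w).Finite) (hL : (completeReturns S w).Finite) :
    (hL.toFinset.card : ℤ) = 1 + ∑ u ∈ hQ.toFinset, ((leftLetters S u).card - 1 : ℤ) := by
  have hw' : w ∈ hQ.toFinset ∪ hL.toFinset :=
    mem_union_left _ (hQ.mem_toFinset.mpr (self_mem_firstHits hw hwne))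
  have hforest := sum_sum_children_eq_sum (I := hQ.toFinset)
    (X := (hQ.toFinset ∪ hL.toFinset).erase w) (parent := tail)
    (children := leftLetters S) (child := fun u a => a :: u) ?_ ?_ ?_ (fun _ => 1)
  · have hcard := card_erase_add_one hw'
    rw [card_union_of_disjoint (hQ.disjoint_toFinset.mpr
      (disjoint_firstHits_completeReturns hwne))] at hcard
    simp only [sum_const, smul_eq_mul, mul_one] at hforest
    rw [sum_sub_distrib, sum_const, ← Nat.cast_sum, hforest]
    simp only [nsmul_eq_mul, mul_one]
    omega
  · intro x hx
    rw [mem_erase, mem_union, hQ.mem_toFinset, hL.mem_toFinset] at hx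
    exact hQ.mem_toFinset.mpr (tail_mem_firstHits hS hx.2 hx.1)
  · intro u hu x
    rw [hQ.mem_toFinset] at hu
    simp only [mem_erase, mem_union, Set.Finite.mem_toFinset, mem_leftLetters]
    constructor
    · rintro ⟨⟨hxw, hx⟩, rfl⟩
      have hne : x ≠ [] := by
        rintro rfl
        exact hwne (hx.elim (eq_nil_of_suffix_nil ·.2.1) (eq_nil_of_prefix_nil ·.2.1))
      refine ⟨x.head hne, ?_, cons_head_tail hne⟩
      rw [cons_head_tail hne]
      exact hx.elim (·.1) (·.1)
    · rintro ⟨a, ha, rfl⟩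
      refine ⟨⟨fun h => ?_, cons_mem_firstHits_union_completeReturns hwne hu ha⟩, rfl⟩
      have := congrArg length h
      have := hu.2.1.length_le
      simp only [length_cons] at *
      omega
  · intro u a a' h
    simpa using h

end Counting

section FirstReturns

variable {S : Set (List A)} {w x : List A}

theorem mem_retWords_iff (hS : Factorial S) (hwne : w ≠ []) :
    x ∈ retWords S w ↔ w ++ x ∈ S ∧ w <:+ (w ++ x).tail := by
  rw [retWords, Set.mem_ofPred_eq, exists_ne_nil_eq_append_iff hwne]
  exact ⟨fun h => h.2, fun h => ⟨hS.mem_of_isInfix h.1 (suffix_append w x).isInfix, h⟩⟩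

theorem exists_retWords_append_iff (hS : Factorial S) (hwne : w ≠ []) (hwx : w ++ x ∈ S) :
    (∃ y ∈ retWords S w, ∃ z, z ≠ [] ∧ x = y ++ z) ↔ w <:+: (w ++ x).tail.dropLast := by
  simp_rw [mem_retWords_iff hS hwne]
  constructor
  · rintro ⟨y, ⟨-, hy⟩, z, hz, rfl⟩
    rw [← append_assoc, tail_append_of_ne_nil (by simp [hwne]), dropLast_append_of_ne_nil hz]
    exact hy.isInfix.trans (prefix_append _ _).isInfix
  · rintro ⟨s, t, hst⟩
    obtain ⟨c, m, hcm⟩ := exists_cons_of_ne_nil (append_ne_nil_of_left_ne_nil hwne x)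
    rw [hcm, tail_cons] at hst
    rcases eq_nil_or_concat m with rfl | ⟨m, d, rfl⟩
    · simp [hwne] at hst
    rw [concat_eq_append, dropLast_concat] at hst
    rw [concat_eq_append] at hcm
    have hsplit : w ++ x = c :: (s ++ w) ++ (t ++ [d]) := by
      rw [hcm, ← hst]
      simp
    obtain ⟨y, hy⟩ : w <+: c :: (s ++ w) :=
      prefix_of_prefix_length_le (prefix_append w x) (hsplit ▸ prefix_append _ _)
        (by simp only [length_cons, length_append]; omega)
    refine ⟨y, ⟨hS.mem_of_isInfix hwx ?_, ?_⟩, t ++ [d], by simp, ?_⟩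
    · rw [hy, hsplit]
      exact (prefix_append _ _).isInfix
    · rw [hy, tail_cons]
      exact suffix_append s w
    · rw [← append_right_inj w, ← append_assoc, hy, ← hsplit]

theorem mem_firstRet_iff (hS : Factorial S) (hwne : w ≠ []) :
    x ∈ firstRet S w ↔ w ++ x ∈ completeReturns S w := by
  rw [firstRet, Set.mem_ofPred_eq, mem_retWords_iff hS hwne]
  constructor
  · rintro ⟨⟨hwx, hsuf⟩, hfirst⟩
    exact ⟨hwx, prefix_append w x, hS.mem_of_isInfix hwx (tail_suffix _).isInfix, hsuf,
      fun h => hfirst ((exists_retWords_append_iff hS hwne hwx).mpr h)⟩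
  · rintro ⟨hwx, -, -, hsuf, hnot⟩
    exact ⟨⟨hwx, hsuf⟩, fun h => hnot ((exists_retWords_append_iff hS hwne hwx).mp h)⟩

theorem image_append_firstRet (hS : Factorial S) (hwne : w ≠ []) :
    (w ++ ·) '' firstRet S w = completeReturns S w := by
  ext u
  constructor
  · rintro ⟨x, hx, rfl⟩
    exact (mem_firstRet_iff hS hwne).mp hx
  · intro hu
    obtain ⟨x, rfl⟩ := hu.2.1
    exact ⟨x, (mem_firstRet_iff hS hwne).mpr hu, rfl⟩

theorem firstRet_nil (hA : ∀ a : A, [a] ∈ S) : firstRet S [] = Set.range fun a : A => [a] := by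
  ext x
  constructor
  · rintro ⟨⟨-, -, y, hy, hxy⟩, hfirst⟩
    rw [nil_append, append_nil] at hxy
    obtain ⟨a, t, rfl⟩ := exists_cons_of_ne_nil hy
    by_cases ht : t = []
    · exact ⟨a, by rw [hxy, ht]⟩
    · exact absurd ⟨[a], ⟨hA a, hA a, [a], cons_ne_nil a [], rfl⟩, t, ht, hxy⟩ hfirst
  · rintro ⟨a, rfl⟩
    refine ⟨⟨hA a, hA a, [a], cons_ne_nil a [], rfl⟩, ?_⟩
    rintro ⟨y, ⟨-, -, y', hy', hyy'⟩, z, hz, h⟩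
    rw [nil_append, append_nil] at hyy'
    obtain ⟨b, t, rfl⟩ := exists_cons_of_ne_nil hy'
    simp [hyy', hz] at h

end FirstReturns

theorem exists_mk_firstRet_eq_card_add_sum_mval [Fintype A] {S : Set (List A)} {w : List A}
    (hur : UnifRecurrent S) (hA : ∀ a : A, [a] ∈ S) (hw : w ∈ S) (hS : Factorial S) :
    ∃ (N : Finset (List A)) (k : ℕ), (∀ v ∈ N, v ∈ S) ∧ Cardinal.mk (firstRet S w) = k ∧
      (k : ℤ) = Fintype.card A + ∑ v ∈ N, mval S v := by
  rcases eq_or_ne w [] with rfl | hwne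
  · refine ⟨∅, Fintype.card A, by simp, ?_, by simp⟩
    rw [firstRet_nil hA, Cardinal.mk_range_eq _ fun a b h => (cons_eq_cons.mp h).1,
      Cardinal.mk_fintype]
  · obtain ⟨n, -, hn⟩ := hur.2 w hw
    have hN := avoiders_finite hS hn
    have hQ := firstHits_finite hS hn
    have hL := completeReturns_finite hS hn
    refine ⟨hN.toFinset, hL.toFinset.card, fun v hv => (hN.mem_toFinset.mp hv).1, ?_, ?_⟩
    · rw [← Cardinal.mk_image_eq (append_right_injective w), image_append_firstRet hS hwne]
      conv_lhs => rw [← hL.coe_toFinset]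
      exact Cardinal.mk_coe_finset
    · rw [card_completeReturns hS hw hwne hQ hL,
        sum_firstHits_card_leftLetters_sub_one hS hw hwne hA hN hQ]
      ring

end FirstReturn

/-- In a uniformly recurrent set containing the alphabet: if `S` is strong
(resp. weak, resp. neutral) then every set of first right return words has at least
(resp. at most, resp. exactly) `Card A` elements. -/
theorem statement6 {A : Type*} [Fintype A] (S : Set (List A)) (hur : UnifRecurrent S)
    (hA : ∀ a : A, [a] ∈ S) (w : List A) (hw : w ∈ S) :
    (SStrong S → (Fintype.card A : Cardinal) ≤ Cardinal.mk ↥(firstRet S w)) ∧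
    (SWeak S → Cardinal.mk ↥(firstRet S w) ≤ (Fintype.card A : Cardinal)) ∧
    (SNeutral S → Cardinal.mk ↥(firstRet S w) = (Fintype.card A : Cardinal)) := by
  refine ⟨fun h => ?_, fun h => ?_, fun h => ?_⟩ <;>
    obtain ⟨N, k, hNS, hk, hcount⟩ :=
      FirstReturn.exists_mk_firstRet_eq_card_add_sum_mval hur hA hw h.1 <;>
    rw [hk] <;> norm_cast
  · have := Finset.sum_nonneg fun v hv => h.2 v (hNS v hv)
    omega
  · have := Finset.sum_nonpos fun v hv => h.2 v (hNS v hv)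
    omega
  · have := Finset.sum_eq_zero fun v hv => h.2 v (hNS v hv)
    omega
end

section
/- Let S be a biextendable set over a finite alphabet A. Let w in S, let U, V, T ⊆ S, and let ℓ in S \ U be such that ℓw in S. Set U' = (U \ Tℓ) ∪ {ℓ}, where Tℓ = {tℓ : t in T}. If the generalized extension graphs E_{U',V}(w) and E_{T,V}(ℓw) are both acyclic, then E_{U,V}(w) is acyclic. -/
open List

/-!
Split `E_{U,V}(w)` into `G₁`, the edges at left vertices outside `Tℓ`, and `G₂`, the edges at
left vertices in `Tℓ`. Collapsing `Tℓ` onto `ℓ` embeds `G₁` into `E_{U',V}(w)`, and stripping the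
suffix `ℓ` embeds `G₂` into `E_{T,V}(ℓw)`, so both are forests. The vertices met by `G₂` lie in
distinct components of `G₁`: left vertices in `Tℓ` are isolated in `G₁`, and right vertices `r`
met by `G₂` satisfy `ℓwr ∈ S`, so they are all adjacent to `ℓ` in `E_{U',V}(w)`, where a
`G₁`-path between two of them would close a cycle. Then `G₁ ⊔ G₂` is a forest, because a path in
it between two vertices met by `G₂` can only use `G₂`-edges.
-/

namespace SimpleGraph

variable {V V' : Type*} {G G₁ G₂ : SimpleGraph V} {G' : SimpleGraph V'}

theorem IsAcyclic.of_induce_support (h : (G.induce G.support).IsAcyclic) : G.IsAcyclic := by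
  intro v c hc
  have hsupp : ∀ x ∈ c.support, x ∈ G.support := fun x hx =>
    mem_support_of_mem_walk_support c hc.not_nil hx
  refine h (c.induce G.support hsupp) (Walk.IsCycle.of_map (f := (Embedding.induce _).toHom) ?_)
  rwa [Walk.map_induce]

theorem IsAcyclic.of_hom_injOn_support (f : G →g G') (hf : Set.InjOn f G.support)
    (h : G'.IsAcyclic) : G.IsAcyclic :=
  .of_induce_support <| h.comap (f.comp (Embedding.induce _).toHom)
    fun x y hxy => Subtype.ext (hf x.2 y.2 hxy)

theorem IsAcyclic.mem_support_of_adj_of_adj (hG : G.IsAcyclic) {a b c : V} (hab : G.Adj a b)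
    (hac : G.Adj a c) (hbc : b ≠ c) (p : G.Walk b c) : a ∈ p.support := by
  classical
  by_contra ha
  have hpath : (Walk.cons hab p.bypass).IsPath :=
    p.bypass_isPath.cons fun h => ha (p.support_bypass_subset_support h)
  have := hG.eq_snd_of_adj_start hpath hac (Walk.end_mem_support _)
  rw [Walk.snd_cons] at this
  exact hbc this.symm

def avoiding (G : SimpleGraph V) (s : Set V) : SimpleGraph V where
  Adj x y := G.Adj x y ∧ x ∉ s ∧ y ∉ s
  symm := ⟨fun _ _ h => ⟨h.1.symm, h.2.2, h.2.1⟩⟩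
  loopless := ⟨fun _ h => G.irrefl h.1⟩

def meeting (G : SimpleGraph V) (s : Set V) : SimpleGraph V where
  Adj x y := G.Adj x y ∧ (x ∈ s ∨ y ∈ s)
  symm := ⟨fun _ _ h => ⟨h.1.symm, h.2.symm⟩⟩
  loopless := ⟨fun _ h => G.irrefl h.1⟩

theorem avoiding_sup_meeting (G : SimpleGraph V) (s : Set V) :
    G.avoiding s ⊔ G.meeting s = G := by
  ext x y
  simp only [sup_adj, avoiding, meeting]
  tauto

/-- Leaving the `G₁`-component of `a` takes a `G₂`-edge, whose endpoint in that component can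
only be `a`. -/
theorem Walk.reachable_of_notMem_support
    (hsupp : ∀ a ∈ G₂.support, ∀ b ∈ G₂.support, G₁.Reachable a b → a = b) {a x y : V}
    (ha : a ∈ G₂.support) (hax : G₁.Reachable a x) (p : (G₁ ⊔ G₂).Walk x y) (hp : a ∉ p.support) :
    G₁.Reachable a y := by
  induction p with
  | nil => exact hax
  | @cons x z y h q ih =>
    rw [Walk.support_cons, List.mem_cons, not_or] at hp
    rcases h with h | h
    · exact ih (hax.trans h.reachable) hp.2
    · exact absurd (hsupp a ha x ((mem_support G₂).mpr ⟨z, h⟩) hax) hp.1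

theorem Walk.IsPath.edges_subset_edgeSet_right
    (hsupp : ∀ a ∈ G₂.support, ∀ b ∈ G₂.support, G₁.Reachable a b → a = b) {x y : V}
    {p : (G₁ ⊔ G₂).Walk x y} (hp : p.IsPath) (hx : x ∈ G₂.support) (hy : y ∈ G₂.support) :
    ∀ e ∈ p.edges, e ∈ G₂.edgeSet := by
  induction p with
  | nil => simp
  | @cons x z y h q ih =>
    rw [Walk.cons_isPath_iff] at hp
    by_cases h₂ : G₂.Adj x z
    · intro e he
      rw [Walk.edges_cons, List.mem_cons] at he
      rcases he with rfl | he
      · exact h₂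
      · exact ih hp.1 ((mem_support G₂).mpr ⟨x, h₂.symm⟩) hy e he
    · have h₁ : G₁.Adj x z := h.resolve_right h₂
      have hxy := hsupp x hx y hy
        (Walk.reachable_of_notMem_support hsupp hx h₁.reachable q hp.2)
      exact absurd (hxy ▸ q.end_mem_support) hp.2

theorem IsAcyclic.sup (h₁ : G₁.IsAcyclic) (h₂ : G₂.IsAcyclic)
    (hsupp : ∀ a ∈ G₂.support, ∀ b ∈ G₂.support, G₁.Reachable a b → a = b) :
    (G₁ ⊔ G₂).IsAcyclic := by
  classical
  intro v c hc
  by_cases hall : ∀ e ∈ c.edges, e ∈ G₁.edgeSet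
  · exact h₁ (c.transfer G₁ hall) (hc.transfer hall)
  push Not at hall
  obtain ⟨e, hec, he₁⟩ := hall
  have he₂ : e ∈ G₂.edgeSet := by
    have he := c.edges_subset_edgeSet hec
    rw [edgeSet_sup] at he
    exact he.resolve_left he₁
  induction e using Sym2.ind with | h a b => ?_
  have hnb : ¬ (G₁ ⊔ G₂).IsBridge s(a, b) := fun hb => hb.notMem_edges_of_isCycle hc hec
  rw [isBridge_iff_forall_walk_mem_edges] at hnb
  push Not at hnb
  obtain ⟨p, hp⟩ := hnb
  have hG₂ := p.bypass_isPath.edges_subset_edgeSet_right hsupp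
    ((mem_support G₂).mpr ⟨b, he₂⟩) ((mem_support G₂).mpr ⟨a, he₂.symm⟩)
  have := isBridge_iff_forall_walk_mem_edges.mp (isAcyclic_iff_forall_adj_isBridge.mp h₂ he₂)
    (p.bypass.transfer G₂ hG₂)
  rw [Walk.edges_transfer] at this
  exact hp (p.edges_bypass_subset_edges this)

end SimpleGraph

open SimpleGraph

theorem Factorial.mem_of_suffix_s10 {A : Type*} {S : Set (List A)} (hS : Factorial S)
    {u v : List A} (hv : v ∈ S) (huv : u <:+ v) : u ∈ S := by
  obtain ⟨t, rfl⟩ := huv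
  exact hS _ hv u ⟨t, [], by simp⟩

/-- The set `Tℓ` of the header. -/
def appendRight {A : Type*} (T : Set (List A)) (l : List A) : Set (List A) :=
  {u | ∃ t ∈ T, u = t ++ l}

section ExtGraph

variable {A : Type*} {S U V T X : Set (List A)} {w l : List A}

theorem rdrop_append_of_mem_appendRight {u : List A} (hu : u ∈ appendRight T l) :
    u.rdrop l.length ++ l = u := by
  obtain ⟨t, -, rfl⟩ := hu
  rw [List.rdrop_append_length]

theorem rdrop_mem_leftExts {u : List A} (hu : u ∈ appendRight T l) (huw : u ++ w ∈ S) :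
    u.rdrop l.length ∈ leftExts S T (l ++ w) := by
  obtain ⟨t, ht, rfl⟩ := hu
  rw [List.rdrop_append_length]
  exact ⟨ht, by simpa using huw⟩

def leftVertsIn (X : Set (List A)) : Set (leftExts S U w ⊕ rightExts S V w) :=
  Sum.inl '' {u | ↑u ∈ X}

@[simp] theorem inl_mem_leftVertsIn {u : leftExts S U w} :
    (.inl u : leftExts S U w ⊕ rightExts S V w) ∈ leftVertsIn X ↔ ↑u ∈ X := by
  simp [leftVertsIn]

@[simp] theorem inr_notMem_leftVertsIn {r : rightExts S V w} :
    (.inr r : leftExts S U w ⊕ rightExts S V w) ∉ leftVertsIn X := by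
  simp [leftVertsIn]

@[simp] theorem extGraph_adj_inl_inr {u : leftExts S U w} {r : rightExts S V w} :
    (ExtGraph S U V w).Adj (.inl u) (.inr r) ↔ ↑u ++ w ++ ↑r ∈ S := by
  simp [ExtGraph]

@[simp] theorem extGraph_adj_inr_inl {u : leftExts S U w} {r : rightExts S V w} :
    (ExtGraph S U V w).Adj (.inr r) (.inl u) ↔ ↑u ++ w ++ ↑r ∈ S := by
  simp [ExtGraph]

@[simp] theorem extGraph_not_adj_inl_inl {u u' : leftExts S U w} :
    ¬ (ExtGraph S U V w).Adj (.inl u) (.inl u') := by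
  simp [ExtGraph]

@[simp] theorem extGraph_not_adj_inr_inr {r r' : rightExts S V w} :
    ¬ (ExtGraph S U V w).Adj (.inr r) (.inr r') := by
  simp [ExtGraph]

theorem mem_of_inl_mem_support_meeting {u : leftExts S U w}
    (hu : .inl u ∈ ((ExtGraph S U V w).meeting (leftVertsIn X)).support) :
    ↑u ∈ X := by
  obtain ⟨u' | r, hadj, hs⟩ := (mem_support _).mp hu
  · exact absurd hadj extGraph_not_adj_inl_inl
  · simpa using hs

theorem append_mem_of_inr_mem_support_meeting (hS : Factorial S) {r : rightExts S V w}
    (hr : .inr r ∈ ((ExtGraph S U V w).meeting (leftVertsIn (appendRight T l))).support) :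
    l ++ w ++ ↑r ∈ S := by
  obtain ⟨u | r', hadj, hs⟩ := (mem_support _).mp hr
  · obtain ⟨t, -, hu⟩ : ↑u ∈ appendRight T l := by simpa using hs
    have := extGraph_adj_inr_inl.mp hadj
    rw [hu] at this
    exact hS.mem_of_suffix_s10 this ⟨t, by simp⟩
  · exact absurd hadj extGraph_not_adj_inr_inr

open scoped Classical in
noncomputable def collapseHom (hlw : l ++ w ∈ S) :
    (ExtGraph S U V w).avoiding (leftVertsIn (appendRight T l)) →g
      ExtGraph S ((U \ appendRight T l) ∪ {l}) V w where
  toFun := Sum.map (fun u => if h : ↑u ∈ appendRight T l then ⟨l, Or.inr rfl, hlw⟩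
    else ⟨u, Or.inl ⟨u.2.1, h⟩, u.2.2⟩) id
  map_rel' := by
    rintro (u | r) (u' | r') ⟨hadj, hx, hy⟩ <;> simp_all

theorem collapseHom_inl_of_notMem (hlw : l ++ w ∈ S) {u : leftExts S U w}
    (hu : ↑u ∉ appendRight T l) :
    collapseHom (V := V) hlw (.inl u) = .inl ⟨u, Or.inl ⟨u.2.1, hu⟩, u.2.2⟩ := by
  simp [collapseHom, hu]

theorem notMem_of_inl_mem_support_avoiding {u : leftExts S U w}
    (hu : .inl u ∈ ((ExtGraph S U V w).avoiding (leftVertsIn X)).support) :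
    ↑u ∉ X := by
  obtain ⟨-, -, hu, -⟩ := (mem_support _).mp hu
  simpa using hu

theorem injOn_collapseHom (hlw : l ++ w ∈ S) :
    Set.InjOn (collapseHom (U := U) (V := V) (T := T) hlw)
      ((ExtGraph S U V w).avoiding (leftVertsIn (appendRight T l))).support := by
  rintro (u | r) hx (u' | r') hy h
  · rw [collapseHom_inl_of_notMem hlw (notMem_of_inl_mem_support_avoiding hx),
      collapseHom_inl_of_notMem hlw (notMem_of_inl_mem_support_avoiding hy)] at h
    simpa [Subtype.ext_iff] using h
  all_goals simp_all [collapseHom]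

theorem eq_of_reachable_avoiding (hS : Factorial S) (hlU : l ∉ U) (hlw : l ++ w ∈ S)
    (h1 : (ExtGraph S ((U \ appendRight T l) ∪ {l}) V w).IsAcyclic) :
    ∀ a ∈ ((ExtGraph S U V w).meeting (leftVertsIn (appendRight T l))).support,
    ∀ b ∈ ((ExtGraph S U V w).meeting (leftVertsIn (appendRight T l))).support,
      ((ExtGraph S U V w).avoiding (leftVertsIn (appendRight T l))).Reachable a b → a = b := by
  rintro a ha b hb ⟨p⟩
  by_contra hab
  have hpsupp : ∀ x ∈ p.support, x ∈ _ := fun x hx =>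
    mem_support_of_mem_walk_support p (Walk.not_nil_of_ne hab) hx
  have hright : ∀ x ∈ ((ExtGraph S U V w).meeting (leftVertsIn (appendRight T l))).support,
      x ∈ p.support → ∃ r, x = .inr r := by
    rintro (u | r) hx hxp
    · exact absurd (mem_of_inl_mem_support_meeting hx)
        (notMem_of_inl_mem_support_avoiding (hpsupp _ hxp))
    · exact ⟨r, rfl⟩
  obtain ⟨r, rfl⟩ := hright a ha p.start_mem_support
  obtain ⟨r', rfl⟩ := hright b hb p.end_mem_support
  have hL := h1.mem_support_of_adj_of_adj (a := .inl ⟨l, Or.inr rfl, hlw⟩)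
    (b := collapseHom hlw (.inr r)) (c := collapseHom hlw (.inr r'))
    (extGraph_adj_inl_inr.mpr (append_mem_of_inr_mem_support_meeting hS ha))
    (extGraph_adj_inl_inr.mpr (append_mem_of_inr_mem_support_meeting hS hb))
    (by simpa [collapseHom] using hab) (p.map (collapseHom hlw))
  obtain ⟨u | r'', hxp, hx⟩ :
      ∃ x ∈ p.support, collapseHom hlw x = .inl ⟨l, Or.inr rfl, hlw⟩ := by
    simpa using hL
  · rw [collapseHom_inl_of_notMem hlw (notMem_of_inl_mem_support_avoiding (hpsupp _ hxp))] at hx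
    have hul : (u : List A) = l := congrArg Subtype.val (Sum.inl.inj hx)
    exact hlU (hul ▸ u.2.1)
  · simp [collapseHom] at hx

def stripHom (hS : Factorial S) :
    ((ExtGraph S U V w).meeting (leftVertsIn (appendRight T l))).induce
      ((ExtGraph S U V w).meeting (leftVertsIn (appendRight T l))).support →g
      ExtGraph S T V (l ++ w) where
  toFun
    | ⟨.inl u, hu⟩ => .inl ⟨(u : List A).rdrop l.length,
        rdrop_mem_leftExts (mem_of_inl_mem_support_meeting hu) u.2.2⟩
    | ⟨.inr r, hr⟩ => .inr ⟨r, r.2.1, append_mem_of_inr_mem_support_meeting hS hr⟩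
  map_rel' := by
    rintro ⟨u | r, hx⟩ ⟨u' | r', hy⟩ ⟨hadj, -⟩ <;>
      simp only [Function.Embedding.subtype_apply, extGraph_adj_inl_inr, extGraph_adj_inr_inl,
        extGraph_not_adj_inl_inl, extGraph_not_adj_inr_inr] at hadj ⊢
    · rw [← rdrop_append_of_mem_appendRight (mem_of_inl_mem_support_meeting hx)] at hadj
      simpa using hadj
    · rw [← rdrop_append_of_mem_appendRight (mem_of_inl_mem_support_meeting hy)] at hadj
      simpa using hadj

theorem injective_stripHom (hS : Factorial S) :
    Function.Injective (stripHom (U := U) (V := V) (T := T) (w := w) (l := l) hS) := by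
  rintro ⟨u | r, hx⟩ ⟨u' | r', hy⟩ h <;>
    simp only [stripHom, RelHom.coeFn_mk, Sum.inl.injEq, Sum.inr.injEq, Subtype.mk.injEq,
      reduceCtorEq] at h
  · rw [Subtype.mk.injEq, Sum.inl.injEq, ← Subtype.val_inj,
      ← rdrop_append_of_mem_appendRight (mem_of_inl_mem_support_meeting hx),
      ← rdrop_append_of_mem_appendRight (mem_of_inl_mem_support_meeting hy), h]
  · have hr := congrArg Subtype.val h
    rwa [Subtype.mk.injEq, Sum.inr.injEq, ← Subtype.val_inj]

end ExtGraph

theorem statement10_general {A : Type*} (S : Set (List A)) (hS : Biext S)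
    (w : List A) (U V T : Set (List A))
    (l : List A) (hlU : l ∉ U) (hlw : l ++ w ∈ S)
    (h1 : (ExtGraph S ((U \ {u | ∃ t ∈ T, u = t ++ l}) ∪ {l}) V w).IsAcyclic)
    (h2 : (ExtGraph S T V (l ++ w)).IsAcyclic) :
    (ExtGraph S U V w).IsAcyclic := by
  rw [← (ExtGraph S U V w).avoiding_sup_meeting (leftVertsIn (appendRight T l))]
  exact IsAcyclic.sup
    (.of_hom_injOn_support (collapseHom hlw) (injOn_collapseHom hlw) h1)
    (.of_induce_support (h2.comap (stripHom hS.1) (injective_stripHom hS.1)))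
    (eq_of_reachable_avoiding hS.1 hlU hlw h1)

/-- If `E_{U',V}(w)` and `E_{T,V}(ℓw)` are acyclic, where `U' = (U \ Tℓ) ∪ {ℓ}`,
then `E_{U,V}(w)` is acyclic. -/
theorem statement10 {A : Type*} [Fintype A] (S : Set (List A)) (hS : Biext S)
    (w : List A) (hw : w ∈ S) (U V T : Set (List A))
    (hUS : U ⊆ S) (hVS : V ⊆ S) (hTS : T ⊆ S)
    (l : List A) (hl : l ∈ S) (hlU : l ∉ U) (hlw : l ++ w ∈ S)
    (h1 : (ExtGraph S ((U \ {u | ∃ t ∈ T, u = t ++ l}) ∪ {l}) V w).IsAcyclic)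
    (h2 : (ExtGraph S T V (l ++ w)).IsAcyclic) :
    (ExtGraph S U V w).IsAcyclic :=
  statement10_general S hS w U V T l hlU hlw h1 h2
end

section
/- Let S be a tree set over a finite alphabet A. For any w in S, any finite S-maximal suffix code U ⊆ S and any finite S-maximal prefix code V ⊆ S, the generalized extension graph E_{U,V}(w) is a tree. -/
open List

/-! The proof is an induction on the total length of the codes. If an `S`-maximal prefix code
`V` contains a word of length at least two, let `v a` be a longest one; replacing all the words
`v b` of `V` by `v` gives a shorter `S`-maximal prefix code `V'`. The graph `E_{U,V}(x)` is then
obtained from `E_{U,V'}(x)` by blowing up the vertex `v` into the graph `E_{U,A}(x v)`, whose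
right vertices `b` are the words `v b` of `V(x)` and whose left vertices are the neighbours of
`v`; blowing up a vertex of a tree into a tree gives a tree. Starting from the extension graphs
`E(x)` this settles the case `U = A`, and the case of a general `U` follows by the same argument
applied to the set of reversed words. -/

namespace SimpleGraph

variable {V W : Type*} {G : SimpleGraph V} {G' : SimpleGraph W}

lemma Reachable.of_adj_reachable (f : V → W) (hf : ∀ a b, G.Adj a b → G'.Reachable (f a) (f b))
    {a b : V} (h : G.Reachable a b) : G'.Reachable (f a) (f b) := by
  rw [reachable_iff_reflTransGen] at h ⊢
  exact Relation.ReflTransGen.lift' f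
    (fun a b hab => (reachable_iff_reflTransGen _ _).1 (hf a b hab)) _ _ h

lemma Connected.of_adj_reachable (hG : G.Connected) (f : V → W)
    (hf : ∀ a b, G.Adj a b → G'.Reachable (f a) (f b))
    (hcover : ∀ w, ∃ v, G'.Reachable (f v) w) : G'.Connected := by
  obtain ⟨v₀⟩ := hG.nonempty
  have hreach (w : W) : G'.Reachable (f v₀) w :=
    let ⟨v, hv⟩ := hcover w
    (Reachable.of_adj_reachable f hf (hG.preconnected v₀ v)).trans hv
  exact (connected_iff _).2 ⟨fun u w => (hreach u).symm.trans (hreach w), ⟨f v₀⟩⟩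

end SimpleGraph

open SimpleGraph Set

section BipGraph

variable {α β α' β' : Type*} {e : α → β → Prop} {L : Set α} {R : Set β}

def bipGraph (e : α → β → Prop) (L : Set α) (R : Set β) : SimpleGraph (L ⊕ R) where
  Adj x y :=
    (∃ l r, x = Sum.inl l ∧ y = Sum.inr r ∧ e l.val r.val) ∨
    (∃ l r, x = Sum.inr r ∧ y = Sum.inl l ∧ e l.val r.val)
  symm := by
    constructor
    rintro x y (⟨l, r, hx, hy, h⟩ | ⟨l, r, hx, hy, h⟩)
    · exact Or.inr ⟨l, r, hy, hx, h⟩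
    · exact Or.inl ⟨l, r, hy, hx, h⟩
  loopless := by
    constructor
    rintro x (⟨l, r, hx, hy, _⟩ | ⟨l, r, hx, hy, _⟩) <;> subst hx <;> simp at hy

@[simp] lemma bipGraph_adj_inl_inr {l : L} {r : R} :
    (bipGraph e L R).Adj (.inl l) (.inr r) ↔ e l r := by
  simp [bipGraph]

@[simp] lemma bipGraph_adj_inr_inl {l : L} {r : R} :
    (bipGraph e L R).Adj (.inr r) (.inl l) ↔ e l r := by
  simp [bipGraph]

@[simp] lemma bipGraph_not_adj_inl_inl {l l' : L} : ¬ (bipGraph e L R).Adj (.inl l) (.inl l') := by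
  simp [bipGraph]

@[simp] lemma bipGraph_not_adj_inr_inr {r r' : R} : ¬ (bipGraph e L R).Adj (.inr r) (.inr r') := by
  simp [bipGraph]

lemma extGraph_eq_bipGraph {A : Type*} (S U V : Set (List A)) (w : List A) :
    ExtGraph S U V w = bipGraph (fun l r => l ++ w ++ r ∈ S) (leftExts S U w) (rightExts S V w) :=
  rfl

def bipGraph.swapIso (e : α → β → Prop) (L : Set α) (R : Set β) :
    bipGraph e L R ≃g bipGraph (flip e) R L where
  toEquiv := Equiv.sumComm _ _
  map_rel_iff' := by rintro (l | r) (l' | r') <;> simp [flip]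

noncomputable def bipGraph.isoOfBijOn {e' : α' → β' → Prop} {L' : Set α'} {R' : Set β'}
    {f : α → α'} {g : β → β'} (hf : BijOn f L L') (hg : BijOn g R R')
    (he : ∀ l ∈ L, ∀ r ∈ R, e' (f l) (g r) ↔ e l r) :
    bipGraph e L R ≃g bipGraph e' L' R' where
  toEquiv := Equiv.sumCongr (hf.equiv f) (hg.equiv g)
  map_rel_iff' := by
    rintro (l | r) (l' | r') <;> simp [BijOn.equiv, he _ (Subtype.prop _) _ (Subtype.prop _)]

def bipGraph.homOfSubset {L' : Set α} {R' : Set β} (hL : L' ⊆ L) (hR : R' ⊆ R) :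
    bipGraph e L' R' →g bipGraph e L R where
  toFun := Sum.map (inclusion hL) (inclusion hR)
  map_rel' := by rintro (l | r) (l' | r') <;> simp

end BipGraph

section Contract

variable {α β : Type*} {e : α → β → Prop} {L : Set α} {R Q : Set β} {r₀ : β}

def bipEdges (e : α → β → Prop) (L : Set α) (R : Set β) : Set (α × β) :=
  {p | p.1 ∈ L ∧ p.2 ∈ R ∧ e p.1 p.2}

lemma card_edgeSet_bipGraph (e : α → β → Prop) (L : Set α) (R : Set β) :
    Nat.card (bipGraph e L R).edgeSet = (bipEdges e L R).ncard := by
  rw [← Nat.card_coe_set_eq]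
  refine Nat.card_congr (Equiv.ofBijective
    (fun p => ⟨s(.inl ⟨p.1.1, p.2.1⟩, .inr ⟨p.1.2, p.2.2.1⟩), by simpa using p.2.2.2⟩ :
      bipEdges e L R → (bipGraph e L R).edgeSet) ⟨?_, ?_⟩).symm
  · rintro ⟨⟨l, r⟩, h⟩ ⟨⟨l', r'⟩, h'⟩ hh
    simp_all
  · rintro ⟨es, hes⟩
    induction es using Sym2.ind with
    | _ x y =>
      rw [mem_edgeSet] at hes
      rcases x with l | r <;> rcases y with l' | r'
      · simp at hes
      · exact ⟨⟨(l, r'), l.2, r'.2, by simpa using hes⟩, rfl⟩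
      · exact ⟨⟨(l', r), l'.2, r.2, by simpa using hes⟩, by simp [Sym2.eq_swap]⟩
      · simp at hes

lemma bipEdges_finite (hL : L.Finite) (hR : R.Finite) : (bipEdges e L R).Finite :=
  (hL.prod hR).subset fun _ hp => ⟨hp.1, hp.2.1⟩

lemma ncard_bipEdges_union {R₁ R₂ : Set β} (hL : L.Finite) (hR₁ : R₁.Finite) (hR₂ : R₂.Finite)
    (hd : Disjoint R₁ R₂) :
    (bipEdges e L (R₁ ∪ R₂)).ncard = (bipEdges e L R₁).ncard + (bipEdges e L R₂).ncard := by
  have : bipEdges e L (R₁ ∪ R₂) = bipEdges e L R₁ ∪ bipEdges e L R₂ := by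
    ext p
    simp only [bipEdges, mem_union, mem_ofPred_eq]
    tauto
  rw [this, ncard_union_eq _ (bipEdges_finite hL hR₁) (bipEdges_finite hL hR₂)]
  exact disjoint_left.2 fun p h₁ h₂ => disjoint_left.1 hd h₁.2.1 h₂.2.1

lemma ncard_bipEdges_singleton (r₀ : β) :
    (bipEdges e L {r₀}).ncard = {l ∈ L | e l r₀}.ncard := by
  have : bipEdges e L {r₀} = (fun l => (l, r₀)) '' {l ∈ L | e l r₀} := by
    ext ⟨l, r⟩
    simp only [bipEdges, mem_singleton_iff, mem_image, mem_ofPred_eq, Prod.mk.injEq]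
    constructor
    · rintro ⟨hl, rfl, h⟩
      exact ⟨l, ⟨hl, h⟩, rfl, rfl⟩
    · rintro ⟨l, ⟨hl, h⟩, rfl, rfl⟩
      exact ⟨hl, rfl, h⟩
  rw [this, ncard_image_of_injective _ (Prod.mk_left_injective r₀)]

lemma connected_bipGraph_of_contract (hQR : Q ⊆ R) (hr₀ : r₀ ∉ R)
    (h₁ : (bipGraph e L (insert r₀ (R \ Q))).Connected)
    (h₂ : (bipGraph e {l ∈ L | e l r₀} Q).Connected) : (bipGraph e L R).Connected := by
  classical
  let ι := bipGraph.homOfSubset (e := e) (sep_subset L (e · r₀)) hQR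
  obtain ⟨h₀⟩ := h₂.nonempty
  have hH (a : ↥{l ∈ L | e l r₀} ⊕ Q) : (bipGraph e L R).Reachable (ι a) (ι h₀) :=
    (h₂.preconnected a h₀).map ι
  let f : L ⊕ ↥(insert r₀ (R \ Q)) → L ⊕ R
    | .inl l => .inl l
    | .inr r => if h : r.1 ∈ R then .inr ⟨r, h⟩ else ι h₀
  have hf (l : L) (r : ↥(insert r₀ (R \ Q))) (hlr : e l r) :
      (bipGraph e L R).Reachable (f (.inl l)) (f (.inr r)) := by
    by_cases h : r.1 ∈ R
    · simpa [f, h] using Adj.reachable (G := bipGraph e L R) (u := .inl l) (v := .inr ⟨r, h⟩)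
        (by simpa using hlr)
    · have hr : r.1 = r₀ := r.2.resolve_right fun h' => h h'.1
      simp only [f, dif_neg h]
      exact hH (.inl ⟨l, l.2, hr ▸ hlr⟩)
  refine h₁.of_adj_reachable f ?_ ?_
  · rintro (l | r) (l' | r') h <;> simp only [bipGraph_adj_inl_inr, bipGraph_adj_inr_inl,
      bipGraph_not_adj_inl_inl, bipGraph_not_adj_inr_inr] at h
    · exact hf l r' h
    · exact (hf l' r h).symm
  · rintro (l | r)
    · exact ⟨.inl l, .rfl⟩
    · by_cases hq : r.1 ∈ Q
      · refine ⟨.inr ⟨r₀, mem_insert _ _⟩, ?_⟩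
        simp only [f, dif_neg hr₀]
        exact (hH (.inr ⟨r, hq⟩)).symm
      · exact ⟨.inr ⟨r, mem_insert_of_mem _ ⟨r.2, hq⟩⟩, by simp [f]⟩

-- The tree `h₂` takes the place of the vertex `r₀` of the tree `h₁`; by `hP`, every left
-- neighbour of a vertex of `Q` is a left vertex of `h₂`.
theorem isTree_bipGraph_of_contract (hL : L.Finite) (hR : R.Finite) (hQR : Q ⊆ R) (hr₀ : r₀ ∉ R)
    (hP : ∀ l ∈ L, ∀ r ∈ Q, e l r → e l r₀)
    (h₁ : (bipGraph e L (insert r₀ (R \ Q))).IsTree)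
    (h₂ : (bipGraph e {l ∈ L | e l r₀} Q).IsTree) : (bipGraph e L R).IsTree := by
  have := hL.to_subtype
  have := hR.to_subtype
  have hQ : Q.Finite := hR.subset hQR
  have := hQ.to_subtype
  have := (hL.subset (sep_subset L (e · r₀))).to_subtype
  have hRQ : (R \ Q).Finite := hR.sdiff
  have hr₀' : r₀ ∉ R \ Q := fun h => hr₀ h.1
  rw [isTree_iff_connected_and_card] at h₁ h₂ ⊢
  refine ⟨connected_bipGraph_of_contract hQR hr₀ h₁.1 h₂.1, ?_⟩
  have hEH : bipEdges e {l ∈ L | e l r₀} Q = bipEdges e L Q := by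
    ext ⟨l, r⟩
    simp only [bipEdges, mem_ofPred_eq]
    exact ⟨fun h => ⟨h.1.1, h.2⟩, fun h => ⟨⟨h.1, hP l h.1 r h.2.1 h.2.2⟩, h.2⟩⟩
  have hE : (bipEdges e L R).ncard = (bipEdges e L (R \ Q)).ncard + (bipEdges e L Q).ncard := by
    conv_lhs => rw [← sdiff_union_of_subset hQR]
    exact ncard_bipEdges_union hL hRQ hQ disjoint_sdiff_left
  have hE₁ : (bipEdges e L (insert r₀ (R \ Q))).ncard
      = {l ∈ L | e l r₀}.ncard + (bipEdges e L (R \ Q)).ncard := by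
    rw [Set.insert_eq, ncard_bipEdges_union hL (finite_singleton _) hRQ
      (disjoint_singleton_left.2 hr₀'), ncard_bipEdges_singleton]
  have hV₁ : (insert r₀ (R \ Q)).ncard = (R \ Q).ncard + 1 := ncard_insert_of_notMem hr₀' hRQ
  have hV : (R \ Q).ncard + Q.ncard = R.ncard := ncard_sdiff_add_ncard_of_subset hQR hR
  simp only [card_edgeSet_bipGraph, hEH] at h₁ h₂ ⊢
  simp only [Nat.card_sum, Nat.card_coe_set_eq] at h₁ h₂ ⊢
  omega

end Contract

section Codes

variable {A : Type*} {S U V : Set (List A)}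

lemma Factorial.left_mem (hS : Factorial S) {u v : List A} (h : u ++ v ∈ S) : u ∈ S :=
  hS _ h u ⟨[], v, by simp⟩

lemma Factorial.right_mem (hS : Factorial S) {u v : List A} (h : u ++ v ∈ S) : v ∈ S :=
  hS _ h v ⟨u, [], by simp⟩

theorem isSMaxPrefixCode_iff :
    IsSMaxPrefixCode S V ↔
      IsPrefixCode V ∧ V ⊆ S ∧ ∀ s ∈ S, s ≠ [] → ∃ v ∈ V, v <+: s ∨ s <+: v := by
  refine ⟨fun hV => ⟨hV.1, hV.2.1, fun s hs hne => ?_⟩,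
    fun ⟨hcode, hVS, hcomp⟩ => ⟨hcode, hVS, fun Y hY hYS hVY => ?_⟩⟩
  · by_contra! hno
    have hcode' : IsPrefixCode (insert s V) := by
      refine ⟨?_, ?_⟩
      · rintro x (rfl | hx)
        exacts [hne, hV.1.1 x hx]
      · rintro x (rfl | hx) y (rfl | hy) hxy
        · rfl
        · exact absurd hxy (hno y hy).2
        · exact absurd hxy (hno x hx).1
        · exact hV.1.2 x hx y hy hxy
    have hsV : s ∈ V := by
      rw [hV.2.2 _ hcode' (insert_subset hs hV.2.1) (subset_insert _ _)]
      exact mem_insert s V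
    exact (hno s hsV).1 (prefix_refl s)
  · refine subset_antisymm hVY fun y hy => ?_
    obtain ⟨v, hv, h | h⟩ := hcomp y (hYS hy) (hY.1 y hy)
    · rwa [← hY.2 v (hVY hv) y hy h]
    · rwa [hY.2 y hy v (hVY hv) h]

lemma Factorial.preimage_reverse (hS : Factorial S) : Factorial (reverse ⁻¹' S) := by
  rintro v hv u ⟨p, s, rfl⟩
  exact hS _ hv _ ⟨s.reverse, p.reverse, by simp⟩

lemma IsSuffixCode.preimage_reverse (h : IsSuffixCode U) : IsPrefixCode (reverse ⁻¹' U) :=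
  ⟨fun x hx hx0 => h.1 _ hx (by simpa using hx0),
    fun x hx y hy hxy => reverse_injective (h.2 _ hx _ hy (reverse_suffix.2 hxy))⟩

lemma IsPrefixCode.preimage_reverse (h : IsPrefixCode V) : IsSuffixCode (reverse ⁻¹' V) :=
  ⟨fun x hx hx0 => h.1 _ hx (by simpa using hx0),
    fun x hx y hy hxy => reverse_injective (h.2 _ hx _ hy (reverse_prefix.2 hxy))⟩

lemma IsSMaxSuffixCode.preimage_reverse (h : IsSMaxSuffixCode S U) :
    IsSMaxPrefixCode (reverse ⁻¹' S) (reverse ⁻¹' U) := by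
  refine ⟨h.1.preimage_reverse, preimage_mono h.2.1, fun Y hY hYS hUY => ?_⟩
  have hYS' : reverse ⁻¹' Y ⊆ S := reverse_involutive.preimage S ▸ preimage_mono hYS
  have hUY' : U ⊆ reverse ⁻¹' Y := reverse_involutive.preimage U ▸ preimage_mono hUY
  rw [h.2.2 _ hY.preimage_reverse hYS' hUY', reverse_involutive.preimage]

lemma preimage_reverse_letterWords : reverse ⁻¹' letterWords A = letterWords A := by
  ext x
  simp [letterWords, eq_comm (b := x.reverse), eq_comm (b := x)]

end Codes

section Shorten

variable {A : Type*} {S V : Set (List A)} {v : List A} {c : A}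

lemma IsPrefixCode.not_mem_of_append_mem (hV : IsPrefixCode V) (hvc : v ++ [c] ∈ V) : v ∉ V :=
  fun hv => by simpa using hV.2 v hv _ hvc (prefix_append v [c])

lemma IsPrefixCode.eq_append_singleton_of_prefix (hV : IsPrefixCode V) (hvc : v ++ [c] ∈ V)
    (hmax : ∀ r ∈ V, r.length ≤ v.length + 1) : ∀ r ∈ V, v <+: r → ∃ c', r = v ++ [c'] := by
  rintro _ hr ⟨t, rfl⟩
  have ht : t.length ≤ 1 := by simpa using hmax _ hr
  match t, ht with
  | [], _ => exact absurd (by simpa using hr) (hV.not_mem_of_append_mem hvc)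
  | [c'], _ => exact ⟨c', rfl⟩

lemma IsSMaxPrefixCode.append_singleton_mem (hV : IsSMaxPrefixCode S V) (hvc : v ++ [c] ∈ V)
    (hmax : ∀ r ∈ V, r.length ≤ v.length + 1) {c' : A} (hS : v ++ [c'] ∈ S) :
    v ++ [c'] ∈ V := by
  obtain ⟨u, hu, h | h⟩ := (isSMaxPrefixCode_iff.1 hV).2.2 _ hS (by simp)
  · rcases prefix_concat_iff.1 h with rfl | h
    · exact hu
    · have := hV.1.2 u hu _ hvc (h.trans (prefix_append v [c]))
      have := hmax u hu
      simp_all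
  · rwa [h.eq_of_length (le_antisymm h.length_le (by simpa using hmax u hu))]

theorem IsSMaxPrefixCode.shorten (hV : IsSMaxPrefixCode S V) (hvc : v ++ [c] ∈ V)
    (hmax : ∀ r ∈ V, r.length ≤ v.length + 1) (hv : v ≠ []) (hfac : Factorial S) :
    IsSMaxPrefixCode S (insert v {r ∈ V | ¬ v <+: r}) := by
  obtain ⟨hcode, hVS, hcomp⟩ := isSMaxPrefixCode_iff.1 hV
  have hnot (r : List A) (hr : r ∈ V) (hrv : r <+: v) : False := by
    have := hcode.2 r hr _ hvc (hrv.trans (prefix_append v [c]))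
    have := hrv.length_le
    simp_all
  refine isSMaxPrefixCode_iff.2 ⟨⟨?_, ?_⟩, ?_, fun s hs hne => ?_⟩
  · rintro x (rfl | hx)
    exacts [hv, hcode.1 x hx.1]
  · rintro x (rfl | hx) y (rfl | hy) hxy
    · rfl
    · exact absurd hxy hy.2
    · exact (hnot x hx.1 hxy).elim
    · exact hcode.2 x hx.1 y hy.1 hxy
  · exact insert_subset (hfac.left_mem (hVS hvc)) fun r hr => hVS hr.1
  · obtain ⟨u, hu, h⟩ := hcomp s hs hne
    by_cases hvu : v <+: u
    · refine ⟨v, mem_insert _ _, ?_⟩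
      rcases h with h | h
      · exact .inl (hvu.trans h)
      · exact prefix_or_prefix_of_prefix hvu h
    · exact ⟨u, mem_insert_of_mem _ ⟨hu, hvu⟩, h⟩

end Shorten

section ExtGraph

variable {A : Type*} {S U V : Set (List A)}

lemma leftExts_preimage_reverse (S V : Set (List A)) (w : List A) :
    leftExts (reverse ⁻¹' S) (reverse ⁻¹' V) w.reverse = reverse ⁻¹' rightExts S V w := by
  ext l
  simp [leftExts, rightExts]

lemma rightExts_preimage_reverse (S U : Set (List A)) (w : List A) :
    rightExts (reverse ⁻¹' S) (reverse ⁻¹' U) w.reverse = reverse ⁻¹' leftExts S U w := by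
  ext r
  simp [leftExts, rightExts]

lemma bijOn_reverse_preimage (X : Set (List A)) : BijOn reverse X (reverse ⁻¹' X) := by
  rw [← reverse_involutive.image_eq_preimage_symm]
  exact reverse_injective.bijOn_image

noncomputable def extGraphReverseIso (S U V : Set (List A)) (w : List A) :
    ExtGraph S U V w ≃g ExtGraph (reverse ⁻¹' S) (reverse ⁻¹' V) (reverse ⁻¹' U) w.reverse := by
  rw [extGraph_eq_bipGraph, extGraph_eq_bipGraph]
  refine (bipGraph.swapIso _ _ _).trans (bipGraph.isoOfBijOn (f := reverse) (g := reverse)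
    ?_ ?_ fun r _ l _ => ?_)
  · rw [leftExts_preimage_reverse]
    exact bijOn_reverse_preimage _
  · rw [rightExts_preimage_reverse]
    exact bijOn_reverse_preimage _
  · simp [flip]

lemma rightExts_eq_letterWords (hS : Factorial S) (hV : IsSMaxPrefixCode S V)
    (hlen : ∀ v ∈ V, v.length ≤ 1) (x : List A) :
    rightExts S V x = rightExts S (letterWords A) x := by
  have hletter {v : List A} (hv : v ∈ V) : ∃ a, v = [a] :=
    length_eq_one_iff.1 (le_antisymm (hlen v hv) (length_pos_iff.2 (hV.1.1 v hv)))
  ext r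
  refine and_congr_left fun hxr => ⟨fun hr => ?_, ?_⟩
  · obtain ⟨a, rfl⟩ := hletter hr
    exact ⟨a, rfl⟩
  · rintro ⟨a, rfl⟩
    obtain ⟨u, hu, hcomp⟩ := (isSMaxPrefixCode_iff.1 hV).2.2 [a] (hS.right_mem hxr) (by simp)
    obtain ⟨b, rfl⟩ := hletter hu
    obtain rfl : b = a := by simpa [eq_comm] using hcomp
    exact hu

variable {x v : List A}

lemma rightExts_shorten_of_mem (hxv : x ++ v ∈ S) :
    rightExts S (insert v {r ∈ V | ¬ v <+: r}) x
      = insert v (rightExts S V x \ {r ∈ rightExts S V x | v <+: r}) := by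
  ext r
  simp only [rightExts, Set.mem_insert_iff, mem_ofPred_eq, mem_sdiff]
  constructor
  · rintro ⟨rfl | ⟨hr, hvr⟩, hxr⟩
    exacts [.inl rfl, .inr ⟨⟨hr, hxr⟩, fun h => hvr h.2⟩]
  · rintro (rfl | ⟨⟨hr, hxr⟩, hvr⟩)
    exacts [⟨.inl rfl, hxv⟩, ⟨.inr ⟨hr, fun h => hvr ⟨⟨hr, hxr⟩, h⟩⟩, hxr⟩]

lemma rightExts_shorten_of_not_mem (hS : Factorial S) (hxv : x ++ v ∉ S) :
    rightExts S (insert v {r ∈ V | ¬ v <+: r}) x = rightExts S V x := by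
  ext r
  simp only [rightExts, Set.mem_insert_iff, mem_ofPred_eq]
  constructor
  · rintro ⟨rfl | ⟨hr, _⟩, hxr⟩
    exacts [absurd hxr hxv, ⟨hr, hxr⟩]
  · rintro ⟨hr, hxr⟩
    refine ⟨.inr ⟨hr, fun ⟨t, ht⟩ => hxv (hS.left_mem (v := t) ?_)⟩, hxr⟩
    rwa [append_assoc, ht]

lemma leftExts_append (hS : Factorial S) (U : Set (List A)) (x v : List A) :
    leftExts S U (x ++ v) = {l ∈ leftExts S U x | l ++ x ++ v ∈ S} := by
  ext l
  simp only [leftExts, mem_ofPred_eq, ← append_assoc]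
  exact ⟨fun h => ⟨⟨h.1, hS.left_mem h.2⟩, h.2⟩, fun h => ⟨h.1.1, h.2⟩⟩

lemma bijOn_append_rightExts_letterWords (hS : Factorial S)
    (hpre : ∀ r ∈ V, v <+: r → ∃ c, r = v ++ [c]) (hsplit : ∀ c, v ++ [c] ∈ S → v ++ [c] ∈ V) :
    BijOn (v ++ ·) (rightExts S (letterWords A) (x ++ v)) {r ∈ rightExts S V x | v <+: r} := by
  refine ⟨?_, fun r _ r' _ h => append_cancel_left h, ?_⟩
  · rintro _ ⟨⟨c, rfl⟩, hxvc⟩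
    rw [append_assoc] at hxvc
    exact ⟨⟨hsplit c (hS.right_mem hxvc), hxvc⟩, prefix_append v [c]⟩
  · rintro r ⟨⟨hr, hxr⟩, hvr⟩
    obtain ⟨c, rfl⟩ := hpre r hr hvr
    exact ⟨[c], ⟨⟨c, rfl⟩, by rwa [append_assoc]⟩, rfl⟩

theorem isTree_extGraph_of_shorten (hS : Factorial S) (hU : U.Finite) (hV : V.Finite)
    (hpre : ∀ r ∈ V, v <+: r → ∃ c, r = v ++ [c]) (hsplit : ∀ c, v ++ [c] ∈ S → v ++ [c] ∈ V)
    (h₁ : (ExtGraph S U (insert v {r ∈ V | ¬ v <+: r}) x).IsTree)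
    (h₂ : x ++ v ∈ S → (ExtGraph S U (letterWords A) (x ++ v)).IsTree) :
    (ExtGraph S U V x).IsTree := by
  rw [extGraph_eq_bipGraph] at h₁ ⊢
  by_cases hxv : x ++ v ∈ S
  · rw [rightExts_shorten_of_mem hxv] at h₁
    have hvV : v ∉ V := fun hv => by simpa using hpre v hv (prefix_refl v)
    refine isTree_bipGraph_of_contract (hU.subset fun l hl => hl.1) (hV.subset fun r hr => hr.1)
      (sep_subset _ _) (fun h => hvV h.1) ?_ h₁ ?_
    · rintro l - _ ⟨-, t, rfl⟩ hlr
      exact hS.left_mem (u := l ++ x ++ v) (v := t) (by simpa using hlr)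
    · have h₂ := h₂ hxv
      rw [extGraph_eq_bipGraph] at h₂
      refine (bipGraph.isoOfBijOn (f := id) ?_ (bijOn_append_rightExts_letterWords hS hpre hsplit)
        fun l _ r _ => ?_).isTree_iff.1 h₂
      · rw [leftExts_append hS]
        exact bijOn_id _
      · simp
  · rwa [rightExts_shorten_of_not_mem hS hxv] at h₁

end ExtGraph

section Induction

variable {A : Type*} {S U : Set (List A)}

lemma sum_length_shorten_lt [DecidableEq A] {V : Finset (List A)} {v : List A} {c : A}
    (hvc : v ++ [c] ∈ V) (hvV : v ∉ V) :
    ∑ r ∈ insert v (V.filter (¬ v <+: ·)), r.length < ∑ r ∈ V, r.length := by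
  have hsub : V.filter (¬ v <+: ·) ⊆ V.erase (v ++ [c]) := fun r hr => by
    simp only [Finset.mem_filter, Finset.mem_erase] at hr ⊢
    exact ⟨fun h => hr.2 (h ▸ prefix_append v [c]), hr.1⟩
  have hle := Finset.sum_le_sum_of_subset (f := length) hsub
  have herase := Finset.sum_erase_add V length hvc
  rw [Finset.sum_insert fun h => hvV (Finset.mem_filter.1 h).1]
  simp only [length_append, length_singleton] at herase
  omega

theorem isTree_extGraph_of_isSMaxPrefixCode (hS : Factorial S) (hU : U.Finite)
    (hUA : ∀ x ∈ S, (ExtGraph S U (letterWords A) x).IsTree) (V : Finset (List A))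
    (hV : IsSMaxPrefixCode S V) {x : List A} (hx : x ∈ S) : (ExtGraph S U V x).IsTree := by
  classical
  by_cases hlong : ∃ m ∈ V, 2 ≤ m.length
  · obtain ⟨m₀, hm₀, hm₀2⟩ := hlong
    obtain ⟨m, hmV, hmax⟩ := V.exists_max_image length ⟨m₀, hm₀⟩
    have hm := dropLast_append_getLast (hV.1.1 m hmV)
    set v := m.dropLast
    set c := m.getLast _
    have hvc : v ++ [c] ∈ (V : Set (List A)) := by rwa [hm]
    have hmax' (r : List A) (hr : r ∈ (V : Set (List A))) : r.length ≤ v.length + 1 := by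
      simpa [← hm] using hmax r hr
    have hv : v ≠ [] := by
      have := hmax m₀ hm₀
      simpa [v, ← length_pos_iff] using by omega
    have hV₁ : IsSMaxPrefixCode S ↑(insert v (V.filter (¬ v <+: ·))) := by
      rw [Finset.coe_insert, Finset.coe_filter]
      exact hV.shorten hvc hmax' hv hS
    have hdec := sum_length_shorten_lt hvc (hV.1.not_mem_of_append_mem hvc)
    refine isTree_extGraph_of_shorten hS hU V.finite_toSet
      (hV.1.eq_append_singleton_of_prefix hvc hmax') (fun c' => hV.append_singleton_mem hvc hmax')
      ?_ (hUA _)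
    have h₁ := isTree_extGraph_of_isSMaxPrefixCode hS hU hUA _ hV₁ hx
    rwa [Finset.coe_insert, Finset.coe_filter] at h₁
  · push Not at hlong
    rw [extGraph_eq_bipGraph,
      rightExts_eq_letterWords hS hV fun v hv => Nat.le_of_lt_succ (hlong v hv)]
    exact hUA x hx
termination_by ∑ r ∈ V, r.length
decreasing_by exact hdec

end Induction

theorem isTree_extGraph_of_isSMaxSuffixCode {A : Type*} {S U V : Set (List A)} (hS : Factorial S)
    (hV : V.Finite) (hAV : ∀ x ∈ S, (ExtGraph S (letterWords A) V x).IsTree) (hUfin : U.Finite)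
    (hU : IsSMaxSuffixCode S U) {w : List A} (hw : w ∈ S) : (ExtGraph S U V w).IsTree := by
  have hU' : (reverse ⁻¹' U).Finite := hUfin.preimage reverse_injective.injOn
  rw [(extGraphReverseIso S U V w).isTree_iff]
  have h := isTree_extGraph_of_isSMaxPrefixCode hS.preimage_reverse
    (hV.preimage reverse_injective.injOn) (fun x hx => ?_) hU'.toFinset
    (by rw [hU'.coe_toFinset]; exact hU.preimage_reverse) (x := w.reverse) (by simpa using hw)
  · rwa [hU'.coe_toFinset] at h
  · have h := (extGraphReverseIso S (letterWords A) V x.reverse).isTree_iff.1 (hAV _ hx)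
    rwa [reverse_reverse, preimage_reverse_letterWords] at h

/-- In a tree set, every generalized extension graph `E_{U,V}(w)` with `U` a finite
`S`-maximal suffix code and `V` a finite `S`-maximal prefix code is a tree. -/
theorem statement11 {A : Type*} [Fintype A] (S : Set (List A)) (hS : STree S)
    (w : List A) (hw : w ∈ S) (U V : Set (List A))
    (hUfin : U.Finite) (hVfin : V.Finite)
    (hU : IsSMaxSuffixCode S U) (hV : IsSMaxPrefixCode S V) :
    (ExtGraph S U V w).IsTree := by
  have hAV (x : List A) (hx : x ∈ S) : (ExtGraph S (letterWords A) V x).IsTree := by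
    have h := isTree_extGraph_of_isSMaxPrefixCode hS.1.1 (finite_range _) hS.2 hVfin.toFinset
      (by rwa [hVfin.coe_toFinset]) hx
    rwa [hVfin.coe_toFinset] at h
  exact isTree_extGraph_of_isSMaxSuffixCode hS.1.1 hVfin hAV hUfin hU hw
end
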